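/- arXiv:2408.02252 — 5 statements merged into one kernel-verified Lean document; each statement's English description precedes it below -/
import Mathlib

section
/- Hardy inequality with boundary term at infinity: let ℓ ≥ 2 be an integer and set c := 6M/(ℓ(ℓ+1) − 2). Let Φ : (r+, ∞) → ℂ be smooth, bounded on a neighbourhood of r+, possessing a finite limit Φ(∞) := lim_{r→∞} Φ(r), and such that ∫_{r+}^{∞} [ (Δ(r)/r^2)|dΦ/dr|^2 + (ℓ(ℓ+1)/r^2)|Φ(r)|^2 ] dr < ∞. Then ∫_{r+}^{∞} ( ℓ(ℓ+1) / ( r^2 (1 + c/r) ) ) |Φ(r)|^2 dr ≤ ∫_{r+}^{∞} [ (Δ(r)/r^2)|dΦ/dr|^2 + (1/r^2)( ℓ(ℓ+1) − 6M/r )|Φ(r)|^2 ] dr + c k^2 |Φ(∞)|^2. -/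
noncomputable section

open MeasureTheory Filter Set Topology

namespace RWAdS

/-- Δ₋(r) = r² + k²r⁴ − 2Mr. -/
def Dm (M k r : ℝ) : ℝ := r ^ 2 + k ^ 2 * r ^ 4 - 2 * M * r

/-- Δ₊(r) = r² + k²r⁴ + 2Mr. -/
def Dp (M k r : ℝ) : ℝ := r ^ 2 + k ^ 2 * r ^ 4 + 2 * M * r

/-- Δ₀(r) = r² + k²r⁴. -/
def D0 (k r : ℝ) : ℝ := r ^ 2 + k ^ 2 * r ^ 4

/-- w(r) = Δ(r)/r⁴. -/
def w (M k r : ℝ) : ℝ := Dm M k r / r ^ 4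

/-- The angular eigenvalue ℓ(ℓ+1). -/
def lam (ℓ : ℕ) : ℝ := (ℓ : ℝ) * ((ℓ : ℝ) + 1)

/-- Regge–Wheeler potential V(r) = w(r)(ℓ(ℓ+1) − 6M/r). -/
def V (M k : ℝ) (ℓ : ℕ) (r : ℝ) : ℝ := w M k r * (lam ℓ - 6 * M / r)

/-- r₊ is the unique positive root of Δ: it is positive, smaller than 2M,
a root of Δ, and Δ > 0 to its right. -/
def IsHorizon (M k rp : ℝ) : Prop :=
  0 < rp ∧ rp < 2 * M ∧ Dm M k rp = 0 ∧ ∀ r, rp < r → 0 < Dm M k r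

/-- ∂ₜΦ. -/
def dtF (Φ : ℝ → ℝ → ℂ) : ℝ → ℝ → ℂ := fun t r => deriv (fun s => Φ s r) t

/-- ∂ᵣΦ. -/
def drF (Φ : ℝ → ℝ → ℂ) : ℝ → ℝ → ℂ := fun t r => deriv (fun ρ => Φ t ρ) r

/-- Tortoise radial derivative ∂_{r*}Φ = (Δ/r²) ∂ᵣΦ. -/
def drs (M k : ℝ) (Φ : ℝ → ℝ → ℂ) : ℝ → ℝ → ℂ :=
  fun t r => ((Dm M k r / r ^ 2 : ℝ) : ℂ) * drF Φ t r

/-- Outgoing null derivative L = (Δ₊/Δ₀)∂ₜ + (Δ/r²)∂ᵣ. -/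
def Lop (M k : ℝ) (Φ : ℝ → ℝ → ℂ) : ℝ → ℝ → ℂ :=
  fun t r => ((Dp M k r / D0 k r : ℝ) : ℂ) * dtF Φ t r
    + ((Dm M k r / r ^ 2 : ℝ) : ℂ) * drF Φ t r

/-- Ingoing null derivative L̄ = (Δ₋/Δ₀)∂ₜ − (Δ/r²)∂ᵣ. -/
def Lbar (M k : ℝ) (Φ : ℝ → ℝ → ℂ) : ℝ → ℝ → ℂ :=
  fun t r => ((Dm M k r / D0 k r : ℝ) : ℂ) * dtF Φ t r
    - ((Dm M k r / r ^ 2 : ℝ) : ℂ) * drF Φ t r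

/-- Mode Regge–Wheeler operator 𝔑Φ = −L L̄ Φ − V Φ. -/
def RW (M k : ℝ) (ℓ : ℕ) (Φ : ℝ → ℝ → ℂ) : ℝ → ℝ → ℂ :=
  fun t r => -Lop M k (Lbar M k Φ) t r - ((V M k ℓ r : ℝ) : ℂ) * Φ t r

/-- Tortoise derivative of a radial function: g′ = (Δ/r²) dg/dr. -/
def rad (M k : ℝ) (g : ℝ → ℝ) : ℝ → ℝ := fun r => Dm M k r / r ^ 2 * deriv g r

/-- A smooth mode function on I × (r₊, ∞). -/
def ModeFun (rp : ℝ) (I : Set ℝ) (Φ : ℝ → ℝ → ℂ) : Prop :=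
  ContDiffOn ℝ (⊤ : ℕ∞) (fun q : ℝ × ℝ => Φ q.1 q.2) (I ×ˢ Ioi rp)

/-- The operator Δ⁻¹ L̄. -/
def DiLbar (M k : ℝ) (Φ : ℝ → ℝ → ℂ) : ℝ → ℝ → ℂ :=
  fun t r => (((Dm M k r)⁻¹ : ℝ) : ℂ) * Lbar M k Φ t r

/-- The operator r²(L − L̄). -/
def OpI1 (M k : ℝ) (Φ : ℝ → ℝ → ℂ) : ℝ → ℝ → ℂ :=
  fun t r => ((r ^ 2 : ℝ) : ℂ) * (Lop M k Φ t r - Lbar M k Φ t r)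

/-- The operator L + L̄. -/
def OpI2 (M k : ℝ) (Φ : ℝ → ℝ → ℂ) : ℝ → ℝ → ℂ :=
  fun t r => Lop M k Φ t r + Lbar M k Φ t r

/-- Regularity at the horizon: for all p, q and all compact time subintervals,
|Lᵖ (Δ⁻¹L̄)^q Φ| is bounded on [a,b] × (r₊, 3M]. -/
def RegH (M k rp : ℝ) (I : Set ℝ) (Φ : ℝ → ℝ → ℂ) : Prop :=
  ∀ p q : ℕ, ∀ a b : ℝ, Icc a b ⊆ I → ∃ B : ℝ,
    ∀ t ∈ Icc a b, ∀ r ∈ Ioc rp (3 * M), ‖(Lop M k)^[p] ((DiLbar M k)^[q] Φ) t r‖ ≤ B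

/-- Regularity at infinity: for all p, q and all compact time subintervals,
|(r²(L−L̄))ᵖ (L+L̄)^q Φ| is bounded on [a,b] × [8M, ∞). -/
def RegI (M k : ℝ) (I : Set ℝ) (Φ : ℝ → ℝ → ℂ) : Prop :=
  ∀ p q : ℕ, ∀ a b : ℝ, Icc a b ⊆ I → ∃ B : ℝ,
    ∀ t ∈ Icc a b, ∀ r ∈ Ici (8 * M), ‖(OpI1 M k)^[p] ((OpI2 M k)^[q] Φ) t r‖ ≤ B

/-- Vanishing as r → ∞, locally uniformly in t. -/
def VanishInf (I : Set ℝ) (Φ : ℝ → ℝ → ℂ) : Prop :=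
  ∀ a b : ℝ, Icc a b ⊆ I → ∀ ε : ℝ, 0 < ε → ∃ R : ℝ,
    ∀ r : ℝ, R ≤ r → ∀ t ∈ Icc a b, ‖Φ t r‖ ≤ ε

/-- Dirichlet boundary condition. -/
def DirichletBC (I : Set ℝ) (Φ : ℝ → ℝ → ℂ) : Prop := VanishInf I Φ

/-- Robin boundary condition:
2∂ₜ²Φ + (ℓ(ℓ+1)(ℓ(ℓ+1)−2)/(6M)) ∂_{r*}Φ + k²ℓ(ℓ+1)Φ → 0 as r → ∞,
locally uniformly in t. -/
def RobinBC (M k : ℝ) (ℓ : ℕ) (I : Set ℝ) (Φ : ℝ → ℝ → ℂ) : Prop :=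
  VanishInf I (fun t r =>
    2 * dtF (dtF Φ) t r + ((lam ℓ * (lam ℓ - 2) / (6 * M) : ℝ) : ℂ) * drs M k Φ t r
      + ((k ^ 2 * lam ℓ : ℝ) : ℂ) * Φ t r)

/-- Neumann boundary condition: r²∂ᵣΦ → 0 as r → ∞, locally uniformly in t. -/
def NeumannBC (I : Set ℝ) (Φ : ℝ → ℝ → ℂ) : Prop :=
  VanishInf I (fun t r => ((r ^ 2 : ℝ) : ℂ) * drF Φ t r)

/-- Mode solution of the Regge–Wheeler equation, regular at the horizon and at
infinity (boundary conditions imposed separately). -/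
def RWSol (M k rp : ℝ) (ℓ : ℕ) (I : Set ℝ) (Φ : ℝ → ℝ → ℂ) : Prop :=
  ModeFun rp I Φ ∧ (∀ t ∈ I, ∀ r ∈ Ioi rp, RW M k ℓ Φ t r = 0) ∧
    RegH M k rp I Φ ∧ RegI M k I Φ

/-- Dirichlet-or-Robin boundary condition; in the Dirichlet case we additionally
require ∂ₜΦ → 0 as r → ∞ locally uniformly in t. -/
def DoRBC (M k : ℝ) (ℓ : ℕ) (I : Set ℝ) (Φ : ℝ → ℝ → ℂ) : Prop :=
  (DirichletBC I Φ ∧ DirichletBC I (dtF Φ)) ∨ RobinBC M k ℓ I Φ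

/-- Density (in r, after the change of variables dr* = (r²/Δ)dr) of the energy Ẽ. -/
def EtDen (M k : ℝ) (ℓ : ℕ) (Φ : ℝ → ℝ → ℂ) (t r : ℝ) : ℝ :=
  (Dm M k r * Dp M k r / (D0 k r) ^ 2 * ‖dtF Φ t r‖ ^ 2 + ‖drs M k Φ t r‖ ^ 2
    + w M k r * lam ℓ * ‖Φ t r‖ ^ 2) * (r ^ 2 / Dm M k r)

/-- The energy Ẽ[Φ](t). -/
def Et (M k rp : ℝ) (ℓ : ℕ) (Φ : ℝ → ℝ → ℂ) (t : ℝ) : ℝ :=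
  1 / 2 * ∫ r in Ioi rp, EtDen M k ℓ Φ t r

/-- Density of the energy E̊. -/
def ErDen (M k : ℝ) (ℓ : ℕ) (Φ : ℝ → ℝ → ℂ) (t r : ℝ) : ℝ :=
  (Dm M k r * Dp M k r / (D0 k r) ^ 2 * ‖dtF Φ t r‖ ^ 2 + ‖drs M k Φ t r‖ ^ 2
    + V M k ℓ r * ‖Φ t r‖ ^ 2) * (r ^ 2 / Dm M k r)

/-- The energy E̊[Φ](t). -/
def Ering (M k rp : ℝ) (ℓ : ℕ) (Φ : ℝ → ℝ → ℂ) (t : ℝ) : ℝ :=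
  1 / 2 * ∫ r in Ioi rp, ErDen M k ℓ Φ t r

/-- Density of the extra (non-degenerate) term in Ē. -/
def EbDen (M k : ℝ) (Φ : ℝ → ℝ → ℂ) (t r : ℝ) : ℝ :=
  (w M k r)⁻¹ * ‖drs M k Φ t r‖ ^ 2 * (r ^ 2 / Dm M k r)

/-- The energy Ē[Φ](t) = Ẽ[Φ](t) + ∫ w⁻¹|∂_{r*}Φ|² dr*. -/
def Eb (M k rp : ℝ) (ℓ : ℕ) (Φ : ℝ → ℝ → ℂ) (t : ℝ) : ℝ :=
  Et M k rp ℓ Φ t + ∫ r in Ioi rp, EbDen M k Φ t r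

/-- The quantity whose limit as r → ∞ is the boundary energy E∞[Φ](t). -/
def EinfFn (M k : ℝ) (ℓ : ℕ) (Φ : ℝ → ℝ → ℂ) (t r : ℝ) : ℝ :=
  6 * M / (lam ℓ * (lam ℓ - 2)) * (‖dtF Φ t r‖ ^ 2 + k ^ 2 * lam ℓ / 2 * ‖Φ t r‖ ^ 2)

/-- The quantity whose limit as r → r₊ is the horizon flux ẼH[Φ](t2;t1). -/
def EHFn (Φ : ℝ → ℝ → ℂ) (t1 t2 r : ℝ) : ℝ := ∫ t in t1..t2, ‖dtF Φ t r‖ ^ 2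

/-- The quantity whose limit as r → r₊ is the zeroth order part of ĒH[Φ](t2;t1). -/
def EH2Fn (ℓ : ℕ) (Φ : ℝ → ℝ → ℂ) (t1 t2 r : ℝ) : ℝ :=
  ∫ t in t1..t2, (ℓ : ℝ) ^ 2 * ‖Φ t r‖ ^ 2

/-- The quantity whose limit as r → ∞ is the flux at infinity ĒI[Φ](t2;t1). -/
def EIFn (M k : ℝ) (ℓ : ℕ) (Φ : ℝ → ℝ → ℂ) (t1 t2 r : ℝ) : ℝ :=
  ∫ t in t1..t2,
    (‖dtF Φ t r‖ ^ 2 + ‖drs M k Φ t r‖ ^ 2 + k ^ 2 * lam ℓ * ‖Φ t r‖ ^ 2)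

/-- Density of the degenerate energy Ew. -/
def EwDen (M k : ℝ) (ℓ : ℕ) (Φ : ℝ → ℝ → ℂ) (t r : ℝ) : ℝ :=
  w M k r * (‖dtF Φ t r‖ ^ 2 + ‖drs M k Φ t r‖ ^ 2 + (ℓ : ℝ) ^ 2 * ‖Φ t r‖ ^ 2)
    * (r ^ 2 / Dm M k r)

/-- The degenerate energy Ew[Φ](t). -/
def Ew (M k rp : ℝ) (ℓ : ℕ) (Φ : ℝ → ℝ → ℂ) (t : ℝ) : ℝ :=
  ∫ r in Ioi rp, EwDen M k ℓ Φ t r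

/-- Squared L² norm on the slice Σₜ. -/
def L2sq (rp : ℝ) (g : ℝ → ℝ → ℂ) (t : ℝ) : ℝ := ∫ r in Ioi rp, ‖g t r‖ ^ 2 / r ^ 2

private lemma sq_norm_complex (z : ℂ) : ‖z‖ ^ 2 = z.re ^ 2 + z.im ^ 2 := by
  rw [Complex.sq_norm, Complex.normSq_apply]; ring

private lemma key_alg (M k c L r x y u v : ℝ) (hr : r ≠ 0) (hrc : r + c ≠ 0)
    (hM : M = c * (L - 2) / 6) :
    L / (r^2*(1+c/r)) * (x^2+y^2)
      + (r^2+k^2*r^4-2*M*r)/r^2 * ((u + c/(r*(r+c))*x)^2 + (v + c/(r*(r+c))*y)^2)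
      - ( (c*((2*r+4*k^2*r^3-2*M)*(r^3*(r+c)) - (r^2+k^2*r^4-2*M*r)*(4*r^3+3*c*r^2))/(r^3*(r+c))^2) * (x^2+y^2)
          + c*(r^2+k^2*r^4-2*M*r)/(r^3*(r+c)) * (2*(x*u+y*v)) )
    = (r^2+k^2*r^4-2*M*r)/r^2 * (u^2+v^2) + 1/r^2*(L - 6*M/r)*(x^2+y^2) := by
  subst hM
  field_simp
  ring

private lemma g_deriv (M k c r : ℝ) (hr : r ≠ 0) (hrc : r + c ≠ 0) :
    HasDerivAt (fun ρ : ℝ => c * (ρ^2+k^2*ρ^4-2*M*ρ) / (ρ^3*(ρ+c)))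
      (c*((2*r+4*k^2*r^3-2*M)*(r^3*(r+c)) - (r^2+k^2*r^4-2*M*r)*(4*r^3+3*c*r^2))/(r^3*(r+c))^2) r := by
  have h1 : HasDerivAt (fun ρ : ℝ => c * (ρ^2+k^2*ρ^4-2*M*ρ)) (c * (2*r+4*k^2*r^3-2*M)) r := by
    have := (((hasDerivAt_pow 2 r).add ((hasDerivAt_pow 4 r).const_mul (k^2))).sub
      ((hasDerivAt_id' r).const_mul (2*M))).const_mul c
    refine this.congr_deriv ?_
    norm_num only
    ring
  have h2 : HasDerivAt (fun ρ : ℝ => ρ^3*(ρ+c)) (3*r^2*(r+c) + r^3*1) r := by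
    exact ((hasDerivAt_pow 3 r).mul ((hasDerivAt_id' r).add_const c)).congr_deriv (by norm_num)
  have hden : r^3*(r+c) ≠ 0 := mul_ne_zero (pow_ne_zero _ hr) hrc
  have := h1.div h2 hden
  refine this.congr_deriv ?_
  field_simp
  ring

private lemma S_bound (A h C u v x y : ℝ) (hA : 0 ≤ A) (hh : 2*A*h^2 ≤ C) :
    A*((u+h*x)^2+(v+h*y)^2) ≤ 2*(A*(u^2+v^2)) + C*(x^2+y^2) := by
  nlinarith [mul_nonneg hA (sq_nonneg (u - h*x)), mul_nonneg hA (sq_nonneg (v - h*y)),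
    mul_nonneg (sub_nonneg.2 hh) (add_nonneg (sq_nonneg x) (sq_nonneg y))]

set_option maxHeartbeats 2000000 in
/-- Hardy inequality with boundary term at infinity: with c = 6M/(ℓ(ℓ+1) − 2),
for every smooth radial Φ, bounded near r₊, with a limit Φ∞ at infinity and
finite first-order energy,
∫ (ℓ(ℓ+1)/(r²(1+c/r))) |Φ|² dr
  ≤ ∫ [ (Δ/r²)|dΦ/dr|² + (1/r²)(ℓ(ℓ+1) − 6M/r)|Φ|² ] dr + c k² |Φ∞|². -/
theorem hardy_inequality
    (M k : ℝ) (hM : 0 < M) (hk : 0 < k) (rp : ℝ) (hrp : IsHorizon M k rp)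
    (ℓ : ℕ) (hℓ : 2 ≤ ℓ) (Φ : ℝ → ℂ)
    (hsm : ContDiffOn ℝ (⊤ : ℕ∞) Φ (Ioi rp))
    (hbdd : ∃ ε : ℝ, 0 < ε ∧ ∃ B : ℝ, ∀ r ∈ Ioo rp (rp + ε), ‖Φ r‖ ≤ B)
    (Φinf : ℂ) (hlim : Tendsto Φ atTop (𝓝 Φinf))
    (hint : IntegrableOn
      (fun r => Dm M k r / r ^ 2 * ‖deriv Φ r‖ ^ 2 + lam ℓ / r ^ 2 * ‖Φ r‖ ^ 2)
      (Ioi rp)) :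
    (∫ r in Ioi rp, lam ℓ / (r ^ 2 * (1 + (6 * M / (lam ℓ - 2)) / r)) * ‖Φ r‖ ^ 2)
      ≤ (∫ r in Ioi rp,
          (Dm M k r / r ^ 2 * ‖deriv Φ r‖ ^ 2
            + 1 / r ^ 2 * (lam ℓ - 6 * M / r) * ‖Φ r‖ ^ 2))
        + 6 * M / (lam ℓ - 2) * k ^ 2 * ‖Φinf‖ ^ 2 := by
  obtain ⟨hrp0, hrp2M, hDzero, hDpos⟩ := hrp
  have hL6 : (6:ℝ) ≤ lam ℓ := by
    have h2 : (2:ℝ) ≤ (ℓ:ℝ) := by exact_mod_cast hℓ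
    simp only [lam]; nlinarith
  simp only [Dm] at hDzero hDpos hint ⊢
  set L := lam ℓ with hLdef
  clear_value L
  have hL2 : (0:ℝ) < L - 2 := by linarith
  have hL0 : (0:ℝ) < L := by linarith
  set c := 6 * M / (L - 2) with hcdef
  clear_value c
  have hc0 : 0 < c := by rw [hcdef]; exact div_pos (by linarith) hL2
  have hMc : M = c * (L - 2) / 6 := by
    rw [hcdef]; field_simp
  -- basic pointwise facts
  have hrpos : ∀ r ∈ Ioi rp, (0:ℝ) < r := fun r hr => hrp0.trans hr
  have hrne : ∀ r ∈ Ioi rp, r ≠ 0 := fun r hr => (hrpos r hr).ne'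
  have hrcpos : ∀ r ∈ Ioi rp, (0:ℝ) < r + c := fun r hr => by
    have := hrpos r hr; linarith
  have hDnn : ∀ r ∈ Ioi rp, (0:ℝ) ≤ r^2 + k^2*r^4 - 2*M*r := fun r hr => (hDpos r hr).le
  -- regularity
  have hΦc : ContinuousOn Φ (Ioi rp) := hsm.continuousOn
  have hΦ'c : ContinuousOn (deriv Φ) (Ioi rp) :=
    hsm.continuousOn_deriv_of_isOpen isOpen_Ioi (by simp)
  have hdiff : ∀ r ∈ Ioi rp, HasDerivAt Φ (deriv Φ r) r := fun r hr =>
    ((hsm.differentiableOn (by simp)).differentiableAt (isOpen_Ioi.mem_nhds hr)).hasDerivAt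
  have hn2c : ContinuousOn (fun r => ‖Φ r‖^2) (Ioi rp) := (hΦc.norm).pow 2
  have hd2c : ContinuousOn (fun r => ‖deriv Φ r‖^2) (Ioi rp) := (hΦ'c.norm).pow 2
  have hPc : Continuous (fun r : ℝ => r^2 + k^2*r^4 - 2*M*r) := by fun_prop
  have hr2ne : ∀ r ∈ Ioi rp, (r:ℝ)^2 ≠ 0 := fun r hr => pow_ne_zero 2 (hrne r hr)
  -- integrability of the two pieces of hint
  have haemeas : ∀ {f : ℝ → ℝ}, ContinuousOn f (Ioi rp) →
      AEStronglyMeasurable f (volume.restrict (Ioi rp)) :=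
    fun h => h.aestronglyMeasurable measurableSet_Ioi
  have hf1c : ContinuousOn (fun r => (r^2+k^2*r^4-2*M*r)/r^2*‖deriv Φ r‖^2) (Ioi rp) :=
    (hPc.continuousOn.div ((continuous_pow 2).continuousOn) hr2ne).mul hd2c
  have hf2c : ContinuousOn (fun r => L/r^2*‖Φ r‖^2) (Ioi rp) :=
    (continuousOn_const.div ((continuous_pow 2).continuousOn) hr2ne).mul hn2c
  have hf1nn : ∀ r ∈ Ioi rp, 0 ≤ (r^2+k^2*r^4-2*M*r)/r^2*‖deriv Φ r‖^2 := fun r hr =>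
    mul_nonneg (div_nonneg (hDnn r hr) (sq_nonneg r)) (sq_nonneg _)
  have hf2nn : ∀ r ∈ Ioi rp, 0 ≤ L/r^2*‖Φ r‖^2 := fun r hr =>
    mul_nonneg (div_nonneg hL0.le (sq_nonneg r)) (sq_nonneg _)
  have hf1i : IntegrableOn (fun r => (r^2+k^2*r^4-2*M*r)/r^2*‖deriv Φ r‖^2) (Ioi rp) := by
    refine Integrable.mono hint (haemeas hf1c) ?_
    refine (ae_restrict_iff' measurableSet_Ioi).2 (ae_of_all _ fun r hr => ?_)
    have h1 := hf1nn r hr; have h2 := hf2nn r hr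
    exact le_trans (le_of_eq (Real.norm_of_nonneg h1))
      ((by linarith : (r^2+k^2*r^4-2*M*r)/r^2*‖deriv Φ r‖^2
        ≤ (r^2+k^2*r^4-2*M*r)/r^2*‖deriv Φ r‖^2 + L/r^2*‖Φ r‖^2).trans (le_abs_self _))
  have hf2i : IntegrableOn (fun r => L/r^2*‖Φ r‖^2) (Ioi rp) := by
    refine Integrable.mono hint (haemeas hf2c) ?_
    refine (ae_restrict_iff' measurableSet_Ioi).2 (ae_of_all _ fun r hr => ?_)
    have h1 := hf1nn r hr; have h2 := hf2nn r hr
    exact le_trans (le_of_eq (Real.norm_of_nonneg h2))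
      ((by linarith : L/r^2*‖Φ r‖^2
        ≤ (r^2+k^2*r^4-2*M*r)/r^2*‖deriv Φ r‖^2 + L/r^2*‖Φ r‖^2).trans (le_abs_self _))
  have h1r2i : IntegrableOn (fun r => 1/r^2*‖Φ r‖^2) (Ioi rp) := by
    have h := hf2i.const_mul (1/L)
    refine IntegrableOn.congr_fun h (fun r hr => ?_) measurableSet_Ioi
    have hLne : L ≠ 0 := hL0.ne'
    field_simp

  -- f3 = 6M/r^3 |Φ|^2 integrable
  have hf3c : ContinuousOn (fun r => 6*M/r^3*‖Φ r‖^2) (Ioi rp) :=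
    (continuousOn_const.div ((continuous_pow 3).continuousOn)
      (fun r hr => pow_ne_zero 3 (hrne r hr))).mul hn2c
  have hf3nn : ∀ r ∈ Ioi rp, 0 ≤ 6*M/r^3*‖Φ r‖^2 := fun r hr =>
    mul_nonneg (div_nonneg (by linarith) (pow_nonneg (hrpos r hr).le 3)) (sq_nonneg _)
  have hf3i : IntegrableOn (fun r => 6*M/r^3*‖Φ r‖^2) (Ioi rp) := by
    refine Integrable.mono (h1r2i.const_mul (6*M/rp)) (haemeas hf3c) ?_
    refine (ae_restrict_iff' measurableSet_Ioi).2 (ae_of_all _ fun r hr => ?_)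
    have hr0 := hrpos r hr
    have hle : 6*M/r^3*‖Φ r‖^2 ≤ 6*M/rp*(1/r^2*‖Φ r‖^2) := by
      have e2 : 6*M/r^3*‖Φ r‖^2 = (6*M*‖Φ r‖^2)/r^3 := by ring
      have e : 6*M/rp*(1/r^2*‖Φ r‖^2) = (6*M*‖Φ r‖^2)/(rp*r^2) := by ring
      rw [e2, e]
      refine div_le_div_of_nonneg_left (by positivity) (by positivity) ?_
      have hrr : rp < r := hr
      nlinarith [mul_nonneg (mul_nonneg hr0.le hr0.le) (sub_nonneg.2 hrr.le)]
    exact le_trans (le_of_eq (Real.norm_of_nonneg (hf3nn r hr))) (hle.trans (le_abs_self _))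
  -- RHS integrand integrable
  have hRi : IntegrableOn (fun r => (r^2+k^2*r^4-2*M*r)/r^2*‖deriv Φ r‖^2
      + 1/r^2*(L - 6*M/r)*‖Φ r‖^2) (Ioi rp) := by
    refine IntegrableOn.congr_fun ((hf1i.add hf2i).sub hf3i) (fun r hr => ?_) measurableSet_Ioi
    have h0 := hrne r hr
    simp only [Pi.add_apply, Pi.sub_apply]
    field_simp
    ring
  -- LHS integrand integrable
  have hden : ∀ r ∈ Ioi rp, r^2*(1+c/r) = r*(r+c) := by
    intro r hr
    have h0 := hrne r hr
    field_simp
  have hLc : ContinuousOn (fun r => L/(r^2*(1+c/r))*‖Φ r‖^2) (Ioi rp) := by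
    refine ContinuousOn.mul (ContinuousOn.div continuousOn_const ?_ ?_) hn2c
    · exact ((continuous_pow 2).continuousOn).mul
        (continuousOn_const.add (continuousOn_const.div continuousOn_id hrne))
    · intro r hr
      rw [hden r hr]
      exact (mul_pos (hrpos r hr) (hrcpos r hr)).ne'
  have hLnn : ∀ r ∈ Ioi rp, 0 ≤ L/(r^2*(1+c/r))*‖Φ r‖^2 := by
    intro r hr
    rw [hden r hr]
    exact mul_nonneg (div_nonneg hL0.le (mul_pos (hrpos r hr) (hrcpos r hr)).le) (sq_nonneg _)
  have hLle : ∀ r ∈ Ioi rp, L/(r^2*(1+c/r))*‖Φ r‖^2 ≤ L/r^2*‖Φ r‖^2 := by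
    intro r hr
    rw [hden r hr]
    have hr0 := hrpos r hr
    refine mul_le_mul_of_nonneg_right ?_ (sq_nonneg _)
    refine div_le_div_of_nonneg_left hL0.le (by positivity) ?_
    have hcr : 0 < c/r := div_pos hc0 hr0
    nlinarith [mul_pos (pow_pos hr0 2) hcr]
  have hLi : IntegrableOn (fun r => L/(r^2*(1+c/r))*‖Φ r‖^2) (Ioi rp) := by
    refine Integrable.mono hf2i (haemeas hLc) ?_
    refine (ae_restrict_iff' measurableSet_Ioi).2 (ae_of_all _ fun r hr => ?_)
    exact le_trans (le_of_eq (Real.norm_of_nonneg (hLnn r hr))) ((hLle r hr).trans (le_abs_self _))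

  -- the square-completion term S
  set Sf : ℝ → ℝ := fun r => (r^2+k^2*r^4-2*M*r)/r^2 *
      (((deriv Φ r).re + c/(r*(r+c))*(Φ r).re)^2 + ((deriv Φ r).im + c/(r*(r+c))*(Φ r).im)^2)
    with hSfdef
  clear_value Sf
  have hmulne : ∀ r ∈ Ioi rp, r*(r+c) ≠ 0 := fun r hr =>
    (mul_pos (hrpos r hr) (hrcpos r hr)).ne'
  have hxc : ContinuousOn (fun r => (Φ r).re) (Ioi rp) := Complex.continuous_re.comp_continuousOn hΦc
  have hyc : ContinuousOn (fun r => (Φ r).im) (Ioi rp) := Complex.continuous_im.comp_continuousOn hΦc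
  have huc : ContinuousOn (fun r => (deriv Φ r).re) (Ioi rp) :=
    Complex.continuous_re.comp_continuousOn hΦ'c
  have hvc : ContinuousOn (fun r => (deriv Φ r).im) (Ioi rp) :=
    Complex.continuous_im.comp_continuousOn hΦ'c
  have hhc : ContinuousOn (fun r => c/(r*(r+c))) (Ioi rp) :=
    continuousOn_const.div (continuousOn_id.mul (continuousOn_id.add continuousOn_const)) hmulne
  have hSc : ContinuousOn Sf (Ioi rp) := by
    rw [hSfdef]
    exact (hPc.continuousOn.div ((continuous_pow 2).continuousOn) hr2ne).mul
      (((huc.add (hhc.mul hxc)).pow 2).add ((hvc.add (hhc.mul hyc)).pow 2))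
  have hSnn : ∀ r ∈ Ioi rp, 0 ≤ Sf r := by
    intro r hr
    rw [hSfdef]
    exact mul_nonneg (div_nonneg (hDnn r hr) (sq_nonneg r)) (add_nonneg (sq_nonneg _) (sq_nonneg _))
  set Cc := 2*c^2*(1+k^2*rp^2)/rp^2 with hCcdef
  clear_value Cc
  have hCc0 : 0 ≤ Cc := by rw [hCcdef]; exact div_nonneg (by positivity) (sq_nonneg rp)
  have hSdom : ∀ r ∈ Ioi rp, Sf r ≤ 2*((r^2+k^2*r^4-2*M*r)/r^2*‖deriv Φ r‖^2)
      + Cc*(1/r^2*‖Φ r‖^2) := by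
    intro r hr
    have hr0 := hrpos r hr
    have hrcp := hrcpos r hr
    have hrr : rp < r := hr
    have hA : 0 ≤ (r^2+k^2*r^4-2*M*r)/r^2 := div_nonneg (hDnn r hr) (sq_nonneg r)
    have hh2 : 2*((r^2+k^2*r^4-2*M*r)/r^2)*(c/(r*(r+c)))^2 ≤ Cc*(1/r^2) := by
      have e1 : 2*((r^2+k^2*r^4-2*M*r)/r^2)*(c/(r*(r+c)))^2
          = 2*(r^2+k^2*r^4-2*M*r)*c^2/(r^2*(r*(r+c))^2) := by
        field_simp
      have e2 : Cc*(1/r^2) = 2*c^2*(1+k^2*rp^2)/(rp^2*r^2) := by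
        rw [hCcdef]; field_simp
      rw [e1, e2, div_le_div_iff₀ (by positivity) (by positivity)]
      have h4 : r^4 ≤ (r*(r+c))^2 := by
        nlinarith [mul_nonneg (sq_nonneg r) (mul_nonneg (mul_nonneg (by norm_num : (0:ℝ) ≤ 2) hr0.le) hc0.le),
          sq_nonneg (r*c)]
      have hint1 := mul_le_mul_of_nonneg_left h4 (by positivity : (0:ℝ) ≤ 2*c^2*(1+k^2*rp^2)*r^2)
      have hP2 : r^2+k^2*r^4-2*M*r ≤ r^2+k^2*r^4 := by nlinarith [mul_pos hM hr0]
      have hint2 := mul_le_mul_of_nonneg_left hP2 (by positivity : (0:ℝ) ≤ 2*c^2*rp^2*r^2)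
      have hrp2 : rp^2 ≤ r^2 := by
        nlinarith [mul_nonneg (sub_nonneg.2 hrr.le) (by linarith : (0:ℝ) ≤ r + rp)]
      have hint3 := mul_le_mul_of_nonneg_right hrp2 (by positivity : (0:ℝ) ≤ 2*c^2*r^4)
      nlinarith [hint1, hint2, hint3]
    rw [hSfdef]
    simp only [sq_norm_complex]
    refine le_trans (S_bound _ _ _ _ _ _ _ hA hh2) (le_of_eq (by ring))
  have hSi : IntegrableOn Sf (Ioi rp) := by
    refine Integrable.mono ((hf1i.const_mul 2).add (h1r2i.const_mul Cc)) (haemeas hSc) ?_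
    refine (ae_restrict_iff' measurableSet_Ioi).2 (ae_of_all _ fun r hr => ?_)
    exact le_trans (le_of_eq (Real.norm_of_nonneg (hSnn r hr)))
      ((hSdom r hr).trans (le_abs_self _))

  -- the boundary function F and its derivative Fd
  set F : ℝ → ℝ := fun r => if r ≤ rp then 0 else
      c*(r^2+k^2*r^4-2*M*r)/(r^3*(r+c)) * ‖Φ r‖^2 with hFdef
  clear_value F
  set Fd : ℝ → ℝ := fun r =>
      c*((2*r+4*k^2*r^3-2*M)*(r^3*(r+c)) - (r^2+k^2*r^4-2*M*r)*(4*r^3+3*c*r^2))/(r^3*(r+c))^2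
        * ‖Φ r‖^2
      + c*(r^2+k^2*r^4-2*M*r)/(r^3*(r+c))
        * (2*((Φ r).re*(deriv Φ r).re + (Φ r).im*(deriv Φ r).im)) with hFddef
  clear_value Fd
  have hnormsq : ∀ r ∈ Ioi rp, HasDerivAt (fun ρ => ‖Φ ρ‖^2)
      (2*((Φ r).re*(deriv Φ r).re + (Φ r).im*(deriv Φ r).im)) r := by
    intro r hr
    have hΦd := hdiff r hr
    have hre : HasDerivAt (fun ρ => (Φ ρ).re) ((deriv Φ r).re) r :=
      Complex.reCLM.hasFDerivAt.comp_hasDerivAt r hΦd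
    have him : HasDerivAt (fun ρ => (Φ ρ).im) ((deriv Φ r).im) r :=
      Complex.imCLM.hasFDerivAt.comp_hasDerivAt r hΦd
    have h2 := (hre.pow 2).add (him.pow 2)
    have hfun : (fun ρ => ‖Φ ρ‖^2) = fun ρ => (Φ ρ).re^2 + (Φ ρ).im^2 :=
      funext fun ρ => sq_norm_complex _
    rw [hfun]
    refine h2.congr_deriv ?_
    push_cast
    ring
  have hderivF : ∀ r ∈ Ioi rp, HasDerivAt F (Fd r) r := by
    intro r hr
    have hgd := g_deriv M k c r (hrne r hr) (hrcpos r hr).ne'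
    have hmul := hgd.mul (hnormsq r hr)
    rw [hFddef]
    refine HasDerivAt.congr_of_eventuallyEq hmul ?_
    filter_upwards [isOpen_Ioi.mem_nhds hr] with ρ hρ
    rw [hFdef]
    simp only
    rw [if_neg (not_le.2 hρ)]
    rfl
  -- continuity of F at rp from the right
  obtain ⟨ε, hε, B, hB⟩ := hbdd
  have hB0 : 0 ≤ B := le_trans (norm_nonneg _) (hB (rp+ε/2) ⟨by linarith, by linarith⟩)
  have hgrpcont : ContinuousAt (fun ρ => c*(ρ^2+k^2*ρ^4-2*M*ρ)/(ρ^3*(ρ+c))) rp :=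
    (g_deriv M k c rp hrp0.ne' (by linarith : (0:ℝ) < rp + c).ne').continuousAt
  have hgrp0 : c*(rp^2+k^2*rp^4-2*M*rp)/(rp^3*(rp+c)) = 0 := by
    rw [hDzero]
    simp
  have hF0 : F rp = 0 := by rw [hFdef]; simp only; rw [if_pos le_rfl]
  have hcontF : ContinuousWithinAt F (Ici rp) rp := by
    show Tendsto F (𝓝[Ici rp] rp) (𝓝 (F rp))
    rw [hF0]
    apply squeeze_zero_norm'
      (a := fun ρ => |c*(ρ^2+k^2*ρ^4-2*M*ρ)/(ρ^3*(ρ+c))| * B^2)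
    · filter_upwards [self_mem_nhdsWithin,
        mem_nhdsWithin_of_mem_nhds (Iio_mem_nhds (by linarith : rp < rp + ε))] with ρ hρ1 hρ2
      rcases eq_or_lt_of_le (mem_Ici.mp hρ1) with h | h
      · rw [hFdef]
        simp only
        rw [if_pos h.symm.le]
        simp
        positivity
      · rw [hFdef]
        simp only
        rw [if_neg (not_le.2 h)]
        rw [Real.norm_eq_abs, abs_mul, abs_of_nonneg (sq_nonneg ‖Φ ρ‖)]
        exact mul_le_mul_of_nonneg_left
          (pow_le_pow_left₀ (norm_nonneg _) (hB ρ ⟨h, hρ2⟩) 2) (abs_nonneg _)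
    · have h1 : Tendsto (fun ρ => |c*(ρ^2+k^2*ρ^4-2*M*ρ)/(ρ^3*(ρ+c))| * B^2) (𝓝 rp)
          (𝓝 (|c*(rp^2+k^2*rp^4-2*M*rp)/(rp^3*(rp+c))| * B^2)) :=
        ((hgrpcont.abs).mul continuousAt_const).tendsto
      rw [hgrp0] at h1
      simp only [abs_zero, zero_mul] at h1
      exact h1.mono_left nhdsWithin_le_nhds
  -- limit of F at infinity
  have hgt : Tendsto (fun ρ:ℝ => c*(ρ^2+k^2*ρ^4-2*M*ρ)/(ρ^3*(ρ+c))) atTop (𝓝 (c*k^2)) := by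
    have hout : ContinuousAt (fun t:ℝ => c*(t*t+k^2-2*M*(t*t*t))/(1+c*t)) 0 := by
      apply ContinuousAt.div (by fun_prop) (by fun_prop)
      norm_num
    have h1 : Tendsto (fun ρ:ℝ => c*(ρ⁻¹*ρ⁻¹+k^2-2*M*(ρ⁻¹*ρ⁻¹*ρ⁻¹))/(1+c*ρ⁻¹)) atTop
        (𝓝 (c*((0:ℝ)*0+k^2-2*M*((0:ℝ)*0*0))/(1+c*0))) :=
      hout.tendsto.comp tendsto_inv_atTop_zero
    have h2 : (c*((0:ℝ)*0+k^2-2*M*((0:ℝ)*0*0))/(1+c*0)) = c*k^2 := by norm_num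
    rw [h2] at h1
    refine Tendsto.congr' ?_ h1
    filter_upwards [eventually_gt_atTop (max rp 0)] with ρ hρ
    have hρ0 : (0:ℝ) < ρ := lt_of_le_of_lt (le_max_right rp 0) hρ
    have hρc : (0:ℝ) < ρ + c := by linarith
    field_simp
  have hFtop : Tendsto F atTop (𝓝 (c*k^2*‖Φinf‖^2)) := by
    have h2 : Tendsto (fun ρ => c*(ρ^2+k^2*ρ^4-2*M*ρ)/(ρ^3*(ρ+c)) * ‖Φ ρ‖^2) atTop
        (𝓝 (c*k^2*‖Φinf‖^2)) := hgt.mul ((hlim.norm).pow 2)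
    refine Tendsto.congr' ?_ h2
    filter_upwards [eventually_gt_atTop rp] with ρ hρ
    rw [hFdef]
    simp only
    rw [if_neg (not_le.2 hρ)]

  -- pointwise key identity
  have hkey : ∀ r ∈ Ioi rp,
      L / (r^2*(1+c/r)) * ‖Φ r‖^2 + Sf r - Fd r
        = (r^2+k^2*r^4-2*M*r)/r^2*‖deriv Φ r‖^2 + 1/r^2*(L-6*M/r)*‖Φ r‖^2 := by
    intro r hr
    have h := key_alg M k c L r (Φ r).re (Φ r).im (deriv Φ r).re (deriv Φ r).im
      (hrne r hr) (hrcpos r hr).ne' hMc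
    rw [hSfdef, hFddef]
    simp only [sq_norm_complex]
    linarith [h]
  -- integrability of Fd
  have hLSi : IntegrableOn (fun r => L/(r^2*(1+c/r))*‖Φ r‖^2 + Sf r) (Ioi rp) := hLi.add hSi
  have hFdi : IntegrableOn Fd (Ioi rp) := by
    refine IntegrableOn.congr_fun (hLSi.sub hRi) (fun r hr => ?_) measurableSet_Ioi
    have h := hkey r hr
    show (L/(r^2*(1+c/r))*‖Φ r‖^2 + Sf r)
      - ((r^2+k^2*r^4-2*M*r)/r^2*‖deriv Φ r‖^2 + 1/r^2*(L-6*M/r)*‖Φ r‖^2) = Fd r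
    linarith
  -- fundamental theorem of calculus on (rp, ∞)
  have hFTC : ∫ r in Ioi rp, Fd r = c*k^2*‖Φinf‖^2 - F rp :=
    integral_Ioi_of_hasDerivAt_of_tendsto hcontF hderivF hFdi hFtop
  rw [hF0, sub_zero] at hFTC
  -- assembly
  have hRFdi : IntegrableOn (fun r => ((r^2+k^2*r^4-2*M*r)/r^2*‖deriv Φ r‖^2
      + 1/r^2*(L-6*M/r)*‖Φ r‖^2) + Fd r) (Ioi rp) := hRi.add hFdi
  have e3 : (∫ r in Ioi rp, (((r^2+k^2*r^4-2*M*r)/r^2*‖deriv Φ r‖^2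
        + 1/r^2*(L-6*M/r)*‖Φ r‖^2) + Fd r - Sf r))
      = (∫ r in Ioi rp, ((r^2+k^2*r^4-2*M*r)/r^2*‖deriv Φ r‖^2 + 1/r^2*(L-6*M/r)*‖Φ r‖^2))
        + (∫ r in Ioi rp, Fd r) - ∫ r in Ioi rp, Sf r := by
    rw [integral_sub hRFdi hSi, integral_add hRi hFdi]
  have hsplit : (∫ r in Ioi rp, L/(r^2*(1+c/r))*‖Φ r‖^2)
      = (∫ r in Ioi rp, ((r^2+k^2*r^4-2*M*r)/r^2*‖deriv Φ r‖^2 + 1/r^2*(L-6*M/r)*‖Φ r‖^2))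
        + (∫ r in Ioi rp, Fd r) - ∫ r in Ioi rp, Sf r := by
    rw [← e3]
    refine setIntegral_congr_fun measurableSet_Ioi (fun r hr => ?_)
    have h := hkey r hr
    show L/(r^2*(1+c/r))*‖Φ r‖^2
      = ((r^2+k^2*r^4-2*M*r)/r^2*‖deriv Φ r‖^2 + 1/r^2*(L-6*M/r)*‖Φ r‖^2) + Fd r - Sf r
    linarith
  have hSint : 0 ≤ ∫ r in Ioi rp, Sf r := setIntegral_nonneg measurableSet_Ioi hSnn
  rw [hsplit, hFTC]
  linarith


end RWAdS
end
end

section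
/- The Chandrasekhar transformation maps mode Teukolsky solutions to mode Regge–Wheeler solutions: let α̃ be a mode function on ℝ × (r+, ∞). (Spin +2 case.) Set ψ := w^{-1} L̄ α̃ and Ψ := w^{-1} L̄ ψ. If 𝔑α̃ = −2 w′ ψ − w (2 − 12M/r) α̃ on ℝ × (r+, ∞) (the mode-projected Teukolsky equation for α̃ written in Regge–Wheeler form), then 𝔑ψ = −w′ Ψ + 6M w α̃ and 𝔑Ψ = 0 on ℝ × (r+, ∞). (Spin −2 case.) Set ψ := w^{-1} L α̃ and Ψ := w^{-1} L ψ. If 𝔑α̃ = 2 w′ ψ − w (2 − 12M/r) α̃ on ℝ × (r+, ∞), then 𝔑ψ = w′ Ψ − 6M w α̃ and 𝔑Ψ = 0 on ℝ × (r+, ∞). -/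
noncomputable section

open MeasureTheory Filter Set Topology

namespace RWAdS

/-- Chandrasekhar transformation in the ingoing direction: ψ = w⁻¹ L̄ α. -/
def ChandraP (M k : ℝ) (α : ℝ → ℝ → ℂ) : ℝ → ℝ → ℂ :=
  fun t r => (((w M k r)⁻¹ : ℝ) : ℂ) * Lbar M k α t r

/-- Chandrasekhar transformation in the outgoing direction: ψ = w⁻¹ L α. -/
def ChandraM (M k : ℝ) (α : ℝ → ℝ → ℂ) : ℝ → ℝ → ℂ :=
  fun t r => (((w M k r)⁻¹ : ℝ) : ℂ) * Lop M k α t r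



/-! ### Infrastructure: partial derivatives of two-variable functions -/

local notation "SS" => ((⊤:ℕ∞) : WithTop ℕ∞)

/-- Uncurried version. -/
def Unc (Φ : ℝ → ℝ → ℂ) : ℝ × ℝ → ℂ := fun z => Φ z.1 z.2

/-- Smoothness on the region r > rp. -/
def Sm (rp : ℝ) (Φ : ℝ → ℝ → ℂ) : Prop :=
  ∀ t r : ℝ, rp < r → ContDiffAt ℝ SS (Unc Φ) (t, r)

def D1 (F : ℝ × ℝ → ℂ) : ℝ × ℝ → ℂ := fun z => fderiv ℝ F z (1, 0)
def D2 (F : ℝ × ℝ → ℂ) : ℝ × ℝ → ℂ := fun z => fderiv ℝ F z (0, 1)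

lemma hasDerivAt_slice_t {F : ℝ × ℝ → ℂ} {t r : ℝ}
    (h : DifferentiableAt ℝ F (t, r)) :
    HasDerivAt (fun s => F (s, r)) (D1 F (t, r)) t := by
  have := h.hasFDerivAt.comp_hasDerivAt t ((hasDerivAt_id t).prodMk (hasDerivAt_const t r))
  simpa [Function.comp_def, D1] using this

lemma hasDerivAt_slice_r {F : ℝ × ℝ → ℂ} {t r : ℝ}
    (h : DifferentiableAt ℝ F (t, r)) :
    HasDerivAt (fun ρ => F (t, ρ)) (D2 F (t, r)) r := by
  have := h.hasFDerivAt.comp_hasDerivAt r ((hasDerivAt_const r t).prodMk (hasDerivAt_id r))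
  simpa [Function.comp_def, D2] using this

lemma contDiffAt_D1 {F : ℝ × ℝ → ℂ} {z : ℝ × ℝ} (h : ContDiffAt ℝ SS F z) :
    ContDiffAt ℝ SS (D1 F) z :=
  ((ContinuousLinearMap.apply ℝ ℂ ((1:ℝ), (0:ℝ))).contDiff.contDiffAt).comp z
    (h.fderiv_right (by norm_num))

lemma contDiffAt_D2 {F : ℝ × ℝ → ℂ} {z : ℝ × ℝ} (h : ContDiffAt ℝ SS F z) :
    ContDiffAt ℝ SS (D2 F) z :=
  ((ContinuousLinearMap.apply ℝ ℂ ((0:ℝ), (1:ℝ))).contDiff.contDiffAt).comp z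
    (h.fderiv_right (by norm_num))

lemma fderiv_clm_apply_vec {F : ℝ × ℝ → ℂ} {z : ℝ × ℝ}
    (h : DifferentiableAt ℝ (fderiv ℝ F) z) (v u : ℝ × ℝ) :
    fderiv ℝ (fun x => fderiv ℝ F x v) z u = fderiv ℝ (fderiv ℝ F) z u v := by
  have hcomp : (fun x => fderiv ℝ F x v)
      = (ContinuousLinearMap.apply ℝ ℂ v) ∘ (fderiv ℝ F) := rfl
  rw [hcomp, fderiv_comp z ((ContinuousLinearMap.apply ℝ ℂ v).differentiableAt) h,
    ContinuousLinearMap.fderiv]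
  rfl

/-- Schwarz symmetry of second partial derivatives, on an open set of smoothness. -/
lemma D1D2_symm {F : ℝ × ℝ → ℂ} {U : Set (ℝ × ℝ)} (hU : IsOpen U)
    (hF : ∀ z ∈ U, ContDiffAt ℝ SS F z) {z : ℝ × ℝ} (hz : z ∈ U) :
    D1 (D2 F) z = D2 (D1 F) z := by
  have hdiff : DifferentiableAt ℝ (fderiv ℝ F) z :=
    ((hF z hz).fderiv_right (m := SS) (by norm_num)).differentiableAt (by simp)
  have hev : ∀ᶠ y in nhds z, HasFDerivAt F (fderiv ℝ F y) y := by
    filter_upwards [hU.mem_nhds hz] with y hy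
    exact (((hF y hy).differentiableAt (by simp))).hasFDerivAt
  have hsymm := second_derivative_symmetric_of_eventually hev hdiff.hasFDerivAt
    ((1:ℝ), (0:ℝ)) ((0:ℝ), (1:ℝ))
  show fderiv ℝ (fun x => fderiv ℝ F x (0,1)) z (1,0)
      = fderiv ℝ (fun x => fderiv ℝ F x (1,0)) z (0,1)
  rw [fderiv_clm_apply_vec hdiff, fderiv_clm_apply_vec hdiff]
  exact hsymm



section
variable {rp : ℝ} {Φ Ξ : ℝ → ℝ → ℂ} {t r : ℝ} {c : ℝ → ℝ}

lemma Sm.diffAt (h : Sm rp Φ) (hr : rp < r) : DifferentiableAt ℝ (Unc Φ) (t, r) :=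
  (h t r hr).differentiableAt (by simp)

lemma Sm.slice_t (h : Sm rp Φ) (hr : rp < r) : DifferentiableAt ℝ (fun s => Φ s r) t :=
  (hasDerivAt_slice_t (h.diffAt hr)).differentiableAt

lemma Sm.slice_r (h : Sm rp Φ) (hr : rp < r) : DifferentiableAt ℝ (fun ρ => Φ t ρ) r :=
  (hasDerivAt_slice_r (h.diffAt hr)).differentiableAt

lemma dtF_eq (h : Sm rp Φ) (hr : rp < r) : dtF Φ t r = D1 (Unc Φ) (t, r) :=
  (hasDerivAt_slice_t (h.diffAt hr)).deriv

lemma drF_eq (h : Sm rp Φ) (hr : rp < r) : drF Φ t r = D2 (Unc Φ) (t, r) :=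
  (hasDerivAt_slice_r (h.diffAt hr)).deriv

lemma Sm.dtF (h : Sm rp Φ) : Sm rp (dtF Φ) := by
  intro t r hr
  refine (contDiffAt_D1 (h t r hr)).congr_of_eventuallyEq ?_
  filter_upwards [(isOpen_univ.prod isOpen_Ioi).mem_nhds
    (⟨trivial, hr⟩ : (t, r) ∈ (univ ×ˢ Ioi rp))] with z hz
  exact dtF_eq h hz.2

lemma Sm.drF (h : Sm rp Φ) : Sm rp (drF Φ) := by
  intro t r hr
  refine (contDiffAt_D2 (h t r hr)).congr_of_eventuallyEq ?_
  filter_upwards [(isOpen_univ.prod isOpen_Ioi).mem_nhds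
    (⟨trivial, hr⟩ : (t, r) ∈ (univ ×ˢ Ioi rp))] with z hz
  exact drF_eq h hz.2

/-- Schwarz: mixed partials commute. -/
lemma schwarz (h : Sm rp Φ) (hr : rp < r) : dtF (drF Φ) t r = drF (dtF Φ) t r := by
  have h1 : dtF (drF Φ) t r = D1 (D2 (Unc Φ)) (t, r) := by
    have he : (fun s => drF Φ s r) = fun s => D2 (Unc Φ) (s, r) :=
      funext fun s => drF_eq h hr
    show deriv (fun s => drF Φ s r) t = _
    rw [he]
    exact (hasDerivAt_slice_t ((contDiffAt_D2 (h t r hr)).differentiableAt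
      (by simp))).deriv
  have h2 : drF (dtF Φ) t r = D2 (D1 (Unc Φ)) (t, r) := by
    have he : (fun ρ => dtF Φ t ρ) =ᶠ[nhds r] fun ρ => D1 (Unc Φ) (t, ρ) := by
      filter_upwards [Ioi_mem_nhds hr] with ρ hρ
      exact dtF_eq h hρ
    show deriv (fun ρ => dtF Φ t ρ) r = _
    rw [he.deriv_eq]
    exact (hasDerivAt_slice_r ((contDiffAt_D1 (h t r hr)).differentiableAt
      (by simp))).deriv
  rw [h1, h2, D1D2_symm (isOpen_univ.prod isOpen_Ioi)
    (fun z hz => h z.1 z.2 hz.2) (⟨trivial, hr⟩ : (t, r) ∈ (univ ×ˢ Ioi rp))]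

lemma dtF_const_mul : dtF (fun t r => (c r : ℂ) * Φ t r) t r = (c r : ℂ) * dtF Φ t r :=
  deriv_const_mul_field _

lemma dtF_add (h1 : DifferentiableAt ℝ (fun s => Φ s r) t)
    (h2 : DifferentiableAt ℝ (fun s => Ξ s r) t) :
    dtF (fun t r => Φ t r + Ξ t r) t r = dtF Φ t r + dtF Ξ t r :=
  deriv_add h1 h2

lemma hasDerivAt_ofReal_comp (hc : DifferentiableAt ℝ c r) :
    HasDerivAt (fun ρ => ((c ρ : ℝ) : ℂ)) ((deriv c r : ℝ) : ℂ) r := by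
  have := Complex.ofRealCLM.hasFDerivAt.comp_hasDerivAt r hc.hasDerivAt
  simpa [Function.comp_def] using this

lemma drF_mul (hc : DifferentiableAt ℝ c r)
    (hΦ : DifferentiableAt ℝ (fun ρ => Φ t ρ) r) :
    drF (fun t r => (c r : ℂ) * Φ t r) t r
      = ((deriv c r : ℝ) : ℂ) * Φ t r + (c r : ℂ) * drF Φ t r :=
  ((hasDerivAt_ofReal_comp hc).mul hΦ.hasDerivAt).deriv

lemma drF_add (h1 : DifferentiableAt ℝ (fun ρ => Φ t ρ) r)
    (h2 : DifferentiableAt ℝ (fun ρ => Ξ t ρ) r) :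
    drF (fun t r => Φ t r + Ξ t r) t r = drF Φ t r + drF Ξ t r :=
  deriv_add h1 h2

lemma dtF_congr (hE : ∀ t r, rp < r → Φ t r = Ξ t r) (hr : rp < r) :
    dtF Φ t r = dtF Ξ t r := by
  unfold RWAdS.dtF
  congr 1
  funext s
  exact hE s r hr

lemma drF_congr (hE : ∀ t r, rp < r → Φ t r = Ξ t r) (hr : rp < r) :
    drF Φ t r = drF Ξ t r := by
  apply Filter.EventuallyEq.deriv_eq
  filter_upwards [Ioi_mem_nhds hr] with ρ hρ
  exact hE t ρ hρ

end

section
variable {M k rp : ℝ} {Φ Ξ : ℝ → ℝ → ℂ} {t r : ℝ} {c : ℝ → ℝ}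

lemma D0_pos (hr : 0 < r) : 0 < D0 k r := by unfold D0; positivity

lemma Sm.cmul (hc : ∀ r, rp < r → ContDiffAt ℝ SS c r) (h : Sm rp Φ) :
    Sm rp (fun t r => (c r : ℂ) * Φ t r) := by
  intro t r hr
  have h1 : ContDiffAt ℝ SS (fun z : ℝ × ℝ => ((c z.2 : ℝ) : ℂ)) (t, r) :=
    (Complex.ofRealCLM.contDiff.contDiffAt).comp _
      ((hc r hr).comp _ contDiff_snd.contDiffAt)
  exact h1.mul (h t r hr)

lemma Sm.add (h1 : Sm rp Φ) (h2 : Sm rp Ξ) : Sm rp (fun t r => Φ t r + Ξ t r) :=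
  fun t r hr => (h1 t r hr).add (h2 t r hr)

lemma Sm.sub (h1 : Sm rp Φ) (h2 : Sm rp Ξ) : Sm rp (fun t r => Φ t r - Ξ t r) :=
  fun t r hr => (h1 t r hr).sub (h2 t r hr)

lemma contDiffAt_Dm : ContDiffAt ℝ SS (Dm M k) r := by
  unfold Dm; fun_prop

lemma contDiffAt_Dp : ContDiffAt ℝ SS (Dp M k) r := by
  unfold Dp; fun_prop

lemma contDiffAt_D0 : ContDiffAt ℝ SS (D0 k) r := by
  unfold D0; fun_prop

lemma contDiffAt_coefA (hr : 0 < r) :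
    ContDiffAt ℝ SS (fun ρ => Dp M k ρ / D0 k ρ) r :=
  contDiffAt_Dp.div contDiffAt_D0 (D0_pos hr).ne'

lemma contDiffAt_coefB (hr : 0 < r) :
    ContDiffAt ℝ SS (fun ρ => Dm M k ρ / D0 k ρ) r :=
  contDiffAt_Dm.div contDiffAt_D0 (D0_pos hr).ne'

lemma contDiffAt_coefD (hr : 0 < r) :
    ContDiffAt ℝ SS (fun ρ => Dm M k ρ / ρ ^ 2) r :=
  contDiffAt_Dm.div (by fun_prop) (by positivity)

lemma Sm.lop (hrp0 : 0 ≤ rp) (h : Sm rp Φ) : Sm rp (Lop M k Φ) := by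
  have h1 : Sm rp (fun t r => ((Dp M k r / D0 k r : ℝ) : ℂ) * RWAdS.dtF Φ t r) :=
    Sm.cmul (fun r hr => contDiffAt_coefA (lt_of_le_of_lt hrp0 hr)) h.dtF
  have h2 : Sm rp (fun t r => ((Dm M k r / r ^ 2 : ℝ) : ℂ) * RWAdS.drF Φ t r) :=
    Sm.cmul (fun r hr => contDiffAt_coefD (lt_of_le_of_lt hrp0 hr)) h.drF
  exact h1.add h2

lemma Sm.lbar (hrp0 : 0 ≤ rp) (h : Sm rp Φ) : Sm rp (Lbar M k Φ) := by
  have h1 : Sm rp (fun t r => ((Dm M k r / D0 k r : ℝ) : ℂ) * RWAdS.dtF Φ t r) :=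
    Sm.cmul (fun r hr => contDiffAt_coefB (lt_of_le_of_lt hrp0 hr)) h.dtF
  have h2 : Sm rp (fun t r => ((Dm M k r / r ^ 2 : ℝ) : ℂ) * RWAdS.drF Φ t r) :=
    Sm.cmul (fun r hr => contDiffAt_coefD (lt_of_le_of_lt hrp0 hr)) h.drF
  exact h1.sub h2

/-- Leibniz rule for `Lop` on a radial multiple. -/
lemma Lop_radmul (h : Sm rp Φ) (hr : rp < r) (hc : DifferentiableAt ℝ c r) :
    Lop M k (fun t r => (c r : ℂ) * Φ t r) t r
      = ((Dm M k r / r ^ 2 * deriv c r : ℝ) : ℂ) * Φ t r + (c r : ℂ) * Lop M k Φ t r := by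
  show ((Dp M k r / D0 k r : ℝ) : ℂ) * dtF (fun t r => (c r : ℂ) * Φ t r) t r
      + ((Dm M k r / r ^ 2 : ℝ) : ℂ) * drF (fun t r => (c r : ℂ) * Φ t r) t r = _
  rw [dtF_const_mul, drF_mul hc (h.slice_r hr)]
  show ((Dp M k r / D0 k r : ℝ) : ℂ) * ((c r : ℂ) * dtF Φ t r)
      + ((Dm M k r / r ^ 2 : ℝ) : ℂ)
        * (((deriv c r : ℝ) : ℂ) * Φ t r + (c r : ℂ) * drF Φ t r)
    = _
  show _ = ((Dm M k r / r ^ 2 * deriv c r : ℝ) : ℂ) * Φ t r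
      + (c r : ℂ) * (((Dp M k r / D0 k r : ℝ) : ℂ) * dtF Φ t r
        + ((Dm M k r / r ^ 2 : ℝ) : ℂ) * drF Φ t r)
  push_cast
  ring

/-- Leibniz rule for `Lbar` on a radial multiple. -/
lemma Lbar_radmul (h : Sm rp Φ) (hr : rp < r) (hc : DifferentiableAt ℝ c r) :
    Lbar M k (fun t r => (c r : ℂ) * Φ t r) t r
      = -((Dm M k r / r ^ 2 * deriv c r : ℝ) : ℂ) * Φ t r + (c r : ℂ) * Lbar M k Φ t r := by
  show ((Dm M k r / D0 k r : ℝ) : ℂ) * dtF (fun t r => (c r : ℂ) * Φ t r) t r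
      - ((Dm M k r / r ^ 2 : ℝ) : ℂ) * drF (fun t r => (c r : ℂ) * Φ t r) t r = _
  rw [dtF_const_mul, drF_mul hc (h.slice_r hr)]
  show ((Dm M k r / D0 k r : ℝ) : ℂ) * ((c r : ℂ) * dtF Φ t r)
      - ((Dm M k r / r ^ 2 : ℝ) : ℂ)
        * (((deriv c r : ℝ) : ℂ) * Φ t r + (c r : ℂ) * drF Φ t r)
    = _
  show _ = -((Dm M k r / r ^ 2 * deriv c r : ℝ) : ℂ) * Φ t r
      + (c r : ℂ) * (((Dm M k r / D0 k r : ℝ) : ℂ) * dtF Φ t r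
        - ((Dm M k r / r ^ 2 : ℝ) : ℂ) * drF Φ t r)
  push_cast
  ring

lemma Lop_add (h1 : Sm rp Φ) (h2 : Sm rp Ξ) (hr : rp < r) :
    Lop M k (fun t r => Φ t r + Ξ t r) t r = Lop M k Φ t r + Lop M k Ξ t r := by
  show ((Dp M k r / D0 k r : ℝ) : ℂ) * dtF (fun t r => Φ t r + Ξ t r) t r
      + ((Dm M k r / r ^ 2 : ℝ) : ℂ) * drF (fun t r => Φ t r + Ξ t r) t r = _
  rw [dtF_add (h1.slice_t hr) (h2.slice_t hr), drF_add (h1.slice_r hr) (h2.slice_r hr)]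
  show _ = (((Dp M k r / D0 k r : ℝ) : ℂ) * dtF Φ t r
        + ((Dm M k r / r ^ 2 : ℝ) : ℂ) * drF Φ t r)
      + (((Dp M k r / D0 k r : ℝ) : ℂ) * dtF Ξ t r
        + ((Dm M k r / r ^ 2 : ℝ) : ℂ) * drF Ξ t r)
  ring

lemma Lbar_add (h1 : Sm rp Φ) (h2 : Sm rp Ξ) (hr : rp < r) :
    Lbar M k (fun t r => Φ t r + Ξ t r) t r = Lbar M k Φ t r + Lbar M k Ξ t r := by
  show ((Dm M k r / D0 k r : ℝ) : ℂ) * dtF (fun t r => Φ t r + Ξ t r) t r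
      - ((Dm M k r / r ^ 2 : ℝ) : ℂ) * drF (fun t r => Φ t r + Ξ t r) t r = _
  rw [dtF_add (h1.slice_t hr) (h2.slice_t hr), drF_add (h1.slice_r hr) (h2.slice_r hr)]
  show _ = (((Dm M k r / D0 k r : ℝ) : ℂ) * dtF Φ t r
        - ((Dm M k r / r ^ 2 : ℝ) : ℂ) * drF Φ t r)
      + (((Dm M k r / D0 k r : ℝ) : ℂ) * dtF Ξ t r
        - ((Dm M k r / r ^ 2 : ℝ) : ℂ) * drF Ξ t r)
  ring

lemma Lop_congr (hE : ∀ t r, rp < r → Φ t r = Ξ t r) (hr : rp < r) :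
    Lop M k Φ t r = Lop M k Ξ t r := by
  show ((Dp M k r / D0 k r : ℝ) : ℂ) * dtF Φ t r + ((Dm M k r / r ^ 2 : ℝ) : ℂ) * drF Φ t r
    = ((Dp M k r / D0 k r : ℝ) : ℂ) * dtF Ξ t r + ((Dm M k r / r ^ 2 : ℝ) : ℂ) * drF Ξ t r
  rw [dtF_congr hE hr, drF_congr hE hr]

lemma Lbar_congr (hE : ∀ t r, rp < r → Φ t r = Ξ t r) (hr : rp < r) :
    Lbar M k Φ t r = Lbar M k Ξ t r := by
  show ((Dm M k r / D0 k r : ℝ) : ℂ) * dtF Φ t r - ((Dm M k r / r ^ 2 : ℝ) : ℂ) * drF Φ t r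
    = ((Dm M k r / D0 k r : ℝ) : ℂ) * dtF Ξ t r - ((Dm M k r / r ^ 2 : ℝ) : ℂ) * drF Ξ t r
  rw [dtF_congr hE hr, drF_congr hE hr]

end

section
variable {M k rp : ℝ} {Φ : ℝ → ℝ → ℂ} {t r : ℝ}

/-- The null operators commute (on smooth functions). -/
lemma comm_LopLbar (hrp0 : 0 ≤ rp) (h : Sm rp Φ) (hr : rp < r) :
    Lop M k (Lbar M k Φ) t r = Lbar M k (Lop M k Φ) t r := by
  have hr0 : (0:ℝ) < r := lt_of_le_of_lt hrp0 hr
  have hb : DifferentiableAt ℝ (fun ρ => Dm M k ρ / D0 k ρ) r :=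
    (contDiffAt_coefB (M := M) hr0).differentiableAt (by simp)
  have ha : DifferentiableAt ℝ (fun ρ => Dp M k ρ / D0 k ρ) r :=
    (contDiffAt_coefA (M := M) hr0).differentiableAt (by simp)
  have hd : DifferentiableAt ℝ (fun ρ => Dm M k ρ / ρ ^ 2) r :=
    (contDiffAt_coefD (M := M) hr0).differentiableAt (by simp)
  have hab : deriv (fun ρ => Dm M k ρ / D0 k ρ) r
      = - deriv (fun ρ => Dp M k ρ / D0 k ρ) r := by
    have hev : (fun ρ => Dm M k ρ / D0 k ρ)
        =ᶠ[nhds r] (fun ρ => 2 - Dp M k ρ / D0 k ρ) := by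
      filter_upwards [Ioi_mem_nhds hr0] with ρ hρ
      have hD0ρ : D0 k ρ ≠ 0 := (D0_pos hρ).ne'
      unfold Dm Dp D0 at *
      rw [eq_sub_iff_add_eq, ← add_div, div_eq_iff hD0ρ]
      ring
    rw [hev.deriv_eq, deriv_const_sub]
  have e1 : dtF (Lbar M k Φ) t r
      = ((Dm M k r / D0 k r : ℝ) : ℂ) * dtF (dtF Φ) t r
        - ((Dm M k r / r ^ 2 : ℝ) : ℂ) * dtF (drF Φ) t r := by
    show deriv (fun s => ((Dm M k r / D0 k r : ℝ) : ℂ) * dtF Φ s r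
        - ((Dm M k r / r ^ 2 : ℝ) : ℂ) * drF Φ s r) t = _
    rw [deriv_fun_sub ((h.dtF.slice_t hr).const_mul _) ((h.drF.slice_t hr).const_mul _),
      deriv_const_mul_field, deriv_const_mul_field]
    rfl
  have e3 : dtF (Lop M k Φ) t r
      = ((Dp M k r / D0 k r : ℝ) : ℂ) * dtF (dtF Φ) t r
        + ((Dm M k r / r ^ 2 : ℝ) : ℂ) * dtF (drF Φ) t r := by
    show deriv (fun s => ((Dp M k r / D0 k r : ℝ) : ℂ) * dtF Φ s r
        + ((Dm M k r / r ^ 2 : ℝ) : ℂ) * drF Φ s r) t = _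
    rw [deriv_fun_add ((h.dtF.slice_t hr).const_mul _) ((h.drF.slice_t hr).const_mul _),
      deriv_const_mul_field, deriv_const_mul_field]
    rfl
  have e2 : drF (Lbar M k Φ) t r
      = (((deriv (fun ρ => Dm M k ρ / D0 k ρ) r : ℝ)) : ℂ) * dtF Φ t r
        + ((Dm M k r / D0 k r : ℝ) : ℂ) * drF (dtF Φ) t r
        - ((((deriv (fun ρ => Dm M k ρ / ρ ^ 2) r : ℝ)) : ℂ) * drF Φ t r
          + ((Dm M k r / r ^ 2 : ℝ) : ℂ) * drF (drF Φ) t r) := by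
    show deriv (fun ρ => ((Dm M k ρ / D0 k ρ : ℝ) : ℂ) * dtF Φ t ρ
        - ((Dm M k ρ / ρ ^ 2 : ℝ) : ℂ) * drF Φ t ρ) r = _
    rw [deriv_fun_sub
      ((hasDerivAt_ofReal_comp hb).fun_mul (h.dtF.slice_r hr).hasDerivAt).differentiableAt
      ((hasDerivAt_ofReal_comp hd).fun_mul (h.drF.slice_r hr).hasDerivAt).differentiableAt,
      ((hasDerivAt_ofReal_comp hb).fun_mul (h.dtF.slice_r hr).hasDerivAt).deriv,
      ((hasDerivAt_ofReal_comp hd).fun_mul (h.drF.slice_r hr).hasDerivAt).deriv]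
    rfl
  have e4 : drF (Lop M k Φ) t r
      = (((deriv (fun ρ => Dp M k ρ / D0 k ρ) r : ℝ)) : ℂ) * dtF Φ t r
        + ((Dp M k r / D0 k r : ℝ) : ℂ) * drF (dtF Φ) t r
        + ((((deriv (fun ρ => Dm M k ρ / ρ ^ 2) r : ℝ)) : ℂ) * drF Φ t r
          + ((Dm M k r / r ^ 2 : ℝ) : ℂ) * drF (drF Φ) t r) := by
    show deriv (fun ρ => ((Dp M k ρ / D0 k ρ : ℝ) : ℂ) * dtF Φ t ρ
        + ((Dm M k ρ / ρ ^ 2 : ℝ) : ℂ) * drF Φ t ρ) r = _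
    rw [deriv_fun_add
      ((hasDerivAt_ofReal_comp ha).fun_mul (h.dtF.slice_r hr).hasDerivAt).differentiableAt
      ((hasDerivAt_ofReal_comp hd).fun_mul (h.drF.slice_r hr).hasDerivAt).differentiableAt,
      ((hasDerivAt_ofReal_comp ha).fun_mul (h.dtF.slice_r hr).hasDerivAt).deriv,
      ((hasDerivAt_ofReal_comp hd).fun_mul (h.drF.slice_r hr).hasDerivAt).deriv]
    rfl
  show ((Dp M k r / D0 k r : ℝ) : ℂ) * dtF (Lbar M k Φ) t r
      + ((Dm M k r / r ^ 2 : ℝ) : ℂ) * drF (Lbar M k Φ) t r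
    = ((Dm M k r / D0 k r : ℝ) : ℂ) * dtF (Lop M k Φ) t r
      - ((Dm M k r / r ^ 2 : ℝ) : ℂ) * drF (Lop M k Φ) t r
  rw [e1, e2, e3, e4, schwarz h hr, hab]
  push_cast
  ring

end

/-- u(r) = w′/w = −2/r + 6M/r². -/
def uu (M : ℝ) : ℝ → ℝ := fun r => -2 / r + 6 * M / r ^ 2
/-- f(r) = 2 − 6M/r − ℓ(ℓ+1). -/
def ff (M : ℝ) (ℓ : ℕ) : ℝ → ℝ := fun r => 2 - 6 * M / r - lam ℓ
/-- g(r) = ℓ(ℓ+1) − 6M/r. -/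
def gg (M : ℝ) (ℓ : ℕ) : ℝ → ℝ := fun r => lam ℓ - 6 * M / r

section
variable {M k rp : ℝ} {r : ℝ} {ℓ : ℕ}

lemma hasDerivAt_Dm : HasDerivAt (Dm M k) (2 * r + k ^ 2 * (4 * r ^ 3) - 2 * M) r := by
  have h := (((hasDerivAt_pow 2 r).add
      ((hasDerivAt_pow 4 r).const_mul (k ^ 2))).sub ((hasDerivAt_id r).const_mul (2 * M)))
  refine h.congr_deriv ?_
  norm_num

lemma hasDerivAt_w (hr : r ≠ 0) :
    HasDerivAt (w M k) ((-2 * r + 6 * M) / r ^ 4) r := by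
  have h2 : HasDerivAt (fun x : ℝ => x ^ 4) (4 * r ^ 3) r := by
    simpa using hasDerivAt_pow 4 r
  have h := (hasDerivAt_Dm (M := M) (k := k)).div h2 (pow_ne_zero 4 hr)
  refine h.congr_deriv ?_
  unfold Dm
  field_simp
  ring

lemma hasDerivAt_uu (hr : r ≠ 0) :
    HasDerivAt (uu M) (2 / r ^ 2 - 12 * M / r ^ 3) r := by
  have h2 : HasDerivAt (fun x : ℝ => x ^ 2) (2 * r) r := by
    simpa using hasDerivAt_pow 2 r
  have h := ((hasDerivAt_const r (-2 : ℝ)).div (hasDerivAt_id r) hr).add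
    ((hasDerivAt_const r (6 * M)).div h2 (pow_ne_zero 2 hr))
  refine h.congr_deriv ?_
  simp only [id]
  field_simp
  ring

lemma hasDerivAt_ff (hr : r ≠ 0) :
    HasDerivAt (ff M ℓ) (6 * M / r ^ 2) r := by
  have h := (((hasDerivAt_const r (2 : ℝ)).sub
      ((hasDerivAt_const r (6 * M)).div (hasDerivAt_id r) hr)).sub
      (hasDerivAt_const r (lam ℓ)))
  refine h.congr_deriv ?_
  simp only [id]
  field_simp
  ring

lemma hasDerivAt_gg (hr : r ≠ 0) :
    HasDerivAt (gg M ℓ) (6 * M / r ^ 2) r := by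
  have h := ((hasDerivAt_const r (lam ℓ)).sub
      ((hasDerivAt_const r (6 * M)).div (hasDerivAt_id r) hr))
  refine h.congr_deriv ?_
  simp only [id]
  field_simp
  ring

lemma contDiffAt_w (hr : r ≠ 0) : ContDiffAt ℝ SS (w M k) r := by
  unfold w
  exact contDiffAt_Dm.div (by fun_prop) (pow_ne_zero 4 hr)

lemma contDiffAt_winv (hr : r ≠ 0) (hw : w M k r ≠ 0) :
    ContDiffAt ℝ SS (fun ρ => (w M k ρ)⁻¹) r :=
  (contDiffAt_w hr).inv hw

lemma contDiffAt_uu (hr : r ≠ 0) : ContDiffAt ℝ SS (uu M) r := by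
  unfold uu
  exact (contDiffAt_const.div contDiffAt_id hr).add
    (contDiffAt_const.div (by fun_prop) (pow_ne_zero 2 hr))

lemma contDiffAt_ff (hr : r ≠ 0) : ContDiffAt ℝ SS (ff M ℓ) r := by
  unfold ff
  exact (contDiffAt_const.sub (contDiffAt_const.div contDiffAt_id hr)).sub contDiffAt_const

lemma contDiffAt_gg (hr : r ≠ 0) : ContDiffAt ℝ SS (gg M ℓ) r := by
  unfold gg
  exact contDiffAt_const.sub (contDiffAt_const.div contDiffAt_id hr)

/-- w′ = w·u. -/
lemma rad_w (hr : r ≠ 0) : rad M k (w M k) r = w M k r * uu M r := by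
  unfold rad
  rw [(hasDerivAt_w hr).deriv]
  unfold w uu Dm
  field_simp

/-- u′ = (2 − 12M/r)·w. -/
lemma tort_uu (hr : r ≠ 0) :
    Dm M k r / r ^ 2 * deriv (uu M) r = (2 - 12 * M / r) * w M k r := by
  rw [(hasDerivAt_uu hr).deriv]
  unfold w
  field_simp

/-- f′ = 6M·w. -/
lemma tort_ff (hr : r ≠ 0) :
    Dm M k r / r ^ 2 * deriv (ff M ℓ) r = 6 * M * w M k r := by
  rw [(hasDerivAt_ff (ℓ := ℓ) hr).deriv]
  unfold w
  field_simp

/-- g′ = 6M·w. -/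
lemma tort_gg (hr : r ≠ 0) :
    Dm M k r / r ^ 2 * deriv (gg M ℓ) r = 6 * M * w M k r := by
  rw [(hasDerivAt_gg (ℓ := ℓ) hr).deriv]
  unfold w
  field_simp

lemma tort_ngg (hr : r ≠ 0) :
    Dm M k r / r ^ 2 * deriv (fun ρ => -(gg M ℓ ρ)) r = -(6 * M * w M k r) := by
  rw [((hasDerivAt_gg (ℓ := ℓ) hr).fun_neg).deriv]
  unfold w
  field_simp

lemma hV_eq : V M k ℓ r = w M k r * gg M ℓ r := rfl

/-- Constant complex multiple commutes with Lop. -/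
lemma Lop_cconst_mul {Φ : ℝ → ℝ → ℂ} {t : ℝ} (a : ℂ) :
    Lop M k (fun t r => a * Φ t r) t r = a * Lop M k Φ t r := by
  show ((Dp M k r / D0 k r : ℝ) : ℂ) * dtF (fun t r => a * Φ t r) t r
      + ((Dm M k r / r ^ 2 : ℝ) : ℂ) * drF (fun t r => a * Φ t r) t r = _
  unfold RWAdS.dtF RWAdS.drF
  rw [deriv_const_mul_field, deriv_const_mul_field]
  show _ = a * (((Dp M k r / D0 k r : ℝ) : ℂ) * deriv (fun s => Φ s r) t
      + ((Dm M k r / r ^ 2 : ℝ) : ℂ) * deriv (fun ρ => Φ t ρ) r)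
  ring

lemma Lbar_cconst_mul {Φ : ℝ → ℝ → ℂ} {t : ℝ} (a : ℂ) :
    Lbar M k (fun t r => a * Φ t r) t r = a * Lbar M k Φ t r := by
  show ((Dm M k r / D0 k r : ℝ) : ℂ) * dtF (fun t r => a * Φ t r) t r
      - ((Dm M k r / r ^ 2 : ℝ) : ℂ) * drF (fun t r => a * Φ t r) t r = _
  unfold RWAdS.dtF RWAdS.drF
  rw [deriv_const_mul_field, deriv_const_mul_field]
  show _ = a * (((Dm M k r / D0 k r : ℝ) : ℂ) * deriv (fun s => Φ s r) t
      - ((Dm M k r / r ^ 2 : ℝ) : ℂ) * deriv (fun ρ => Φ t ρ) r)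
  ring

end

section
variable {M k rp : ℝ} {r : ℝ} {ℓ : ℕ} {Φ : ℝ → ℝ → ℂ}

lemma tort_nuu (hr : r ≠ 0) :
    Dm M k r / r ^ 2 * deriv (fun ρ => -(uu M ρ)) r = -((2 - 12 * M / r) * w M k r) := by
  rw [((hasDerivAt_uu (M := M) hr).fun_neg).deriv]
  unfold w
  field_simp

lemma Sm.constC (a : ℂ) (h : Sm rp Φ) : Sm rp (fun t r => a * Φ t r) :=
  fun t r hr => contDiffAt_const.mul (h t r hr)

end
/-- The Chandrasekhar transformations map mode Teukolsky solutions to mode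
Regge–Wheeler solutions, for both spins ±2.  Here w′ denotes the tortoise
derivative (Δ/r²)∂ᵣ of w. -/
theorem chandrasekhar_transformation
    (M k : ℝ) (hM : 0 < M) (hk : 0 < k) (rp : ℝ) (hrp : IsHorizon M k rp)
    (ℓ : ℕ) (hℓ : 2 ≤ ℓ) (α : ℝ → ℝ → ℂ)
    (hα : ModeFun rp univ α) :
    -- spin +2 case: ψ = w⁻¹L̄α, Ψ = w⁻¹L̄ψ
    ((∀ t : ℝ, ∀ r ∈ Ioi rp,
        RW M k ℓ α t r
          = -2 * ((rad M k (w M k) r : ℝ) : ℂ) * ChandraP M k α t r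
            - ((w M k r * (2 - 12 * M / r) : ℝ) : ℂ) * α t r) →
      ((∀ t : ℝ, ∀ r ∈ Ioi rp,
          RW M k ℓ (ChandraP M k α) t r
            = -(((rad M k (w M k) r : ℝ) : ℂ)
                  * ChandraP M k (ChandraP M k α) t r)
              + ((6 * M * w M k r : ℝ) : ℂ) * α t r) ∧
        (∀ t : ℝ, ∀ r ∈ Ioi rp,
          RW M k ℓ (ChandraP M k (ChandraP M k α)) t r = 0)))
    ∧
    -- spin −2 case: ψ = w⁻¹Lα, Ψ = w⁻¹Lψ
    ((∀ t : ℝ, ∀ r ∈ Ioi rp,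
        RW M k ℓ α t r
          = 2 * ((rad M k (w M k) r : ℝ) : ℂ) * ChandraM M k α t r
            - ((w M k r * (2 - 12 * M / r) : ℝ) : ℂ) * α t r) →
      ((∀ t : ℝ, ∀ r ∈ Ioi rp,
          RW M k ℓ (ChandraM M k α) t r
            = ((rad M k (w M k) r : ℝ) : ℂ)
                  * ChandraM M k (ChandraM M k α) t r
              - ((6 * M * w M k r : ℝ) : ℂ) * α t r) ∧
        (∀ t : ℝ, ∀ r ∈ Ioi rp,
          RW M k ℓ (ChandraM M k (ChandraM M k α)) t r = 0))) := by
  obtain ⟨hrp0, _hrp2M, _hroot, hDmpos⟩ := hrp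
  have hαs : Sm rp α := fun t r hr =>
    (hα.contDiffAt ((isOpen_univ.prod isOpen_Ioi).mem_nhds
      (show (t, r) ∈ (univ : Set ℝ) ×ˢ Ioi rp from ⟨trivial, hr⟩))).of_le (by simp)
  have hr0 : ∀ r : ℝ, rp < r → (0:ℝ) < r := fun r hr => hrp0.trans hr
  have hwne : ∀ r : ℝ, rp < r → w M k r ≠ 0 := fun r hr => by
    unfold w
    exact div_ne_zero (hDmpos r hr).ne' (pow_ne_zero 4 (hr0 r hr).ne')
  have hwneC : ∀ r : ℝ, rp < r → ((w M k r : ℝ) : ℂ) ≠ 0 := fun r hr =>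
    Complex.ofReal_ne_zero.mpr (hwne r hr)
  constructor
  · -- spin +2
    intro hT
    set ψ := ChandraP M k α with hψdef
    set Ψ := ChandraP M k ψ with hΨdef
    have hψs : Sm rp ψ :=
      Sm.cmul (fun r hr => contDiffAt_winv (hr0 r hr).ne' (hwne r hr)) (hαs.lbar hrp0.le)
    have hΨs : Sm rp Ψ :=
      Sm.cmul (fun r hr => contDiffAt_winv (hr0 r hr).ne' (hwne r hr)) (hψs.lbar hrp0.le)
    have hLbα : ∀ t r, rp < r → Lbar M k α t r = ((w M k r : ℝ) : ℂ) * ψ t r := by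
      intro t r hr
      show Lbar M k α t r
        = ((w M k r : ℝ) : ℂ) * ((((w M k r)⁻¹ : ℝ) : ℂ) * Lbar M k α t r)
      rw [← mul_assoc, ← Complex.ofReal_mul, mul_inv_cancel₀ (hwne r hr),
        Complex.ofReal_one, one_mul]
    have hLbψ : ∀ t r, rp < r → Lbar M k ψ t r = ((w M k r : ℝ) : ℂ) * Ψ t r := by
      intro t r hr
      show Lbar M k ψ t r
        = ((w M k r : ℝ) : ℂ) * ((((w M k r)⁻¹ : ℝ) : ℂ) * Lbar M k ψ t r)
      rw [← mul_assoc, ← Complex.ofReal_mul, mul_inv_cancel₀ (hwne r hr),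
        Complex.ofReal_one, one_mul]
    have hEq1 : ∀ t r, rp < r → Lop M k ψ t r
        = ((uu M r : ℝ) : ℂ) * ψ t r + ((ff M ℓ r : ℝ) : ℂ) * α t r := by
      intro t r hr
      have h1 : Lop M k (Lbar M k α) t r
          = ((rad M k (w M k) r : ℝ) : ℂ) * ψ t r
            + ((w M k r : ℝ) : ℂ) * Lop M k ψ t r := by
        rw [Lop_congr (Ξ := fun t r => ((w M k r : ℝ) : ℂ) * ψ t r) hLbα hr]
        exact Lop_radmul hψs hr ((hasDerivAt_w (hr0 r hr).ne').differentiableAt)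
      have h2 := hT t r hr
      simp only [RW] at h2
      rw [h1, rad_w (hr0 r hr).ne', hV_eq] at h2
      apply mul_left_cancel₀ (hwneC r hr)
      simp only [uu, ff, gg] at h2 ⊢
      push_cast at h2 ⊢
      linear_combination -h2
    have hC : ∀ t r, rp < r → Lop M k (Lbar M k ψ) t r
        = ((w M k r * uu M r : ℝ) : ℂ) * Ψ t r - ((V M k ℓ r : ℝ) : ℂ) * ψ t r
          - ((6 * M * w M k r : ℝ) : ℂ) * α t r := by
      intro t r hr
      rw [comm_LopLbar hrp0.le hψs hr,
        Lbar_congr (Ξ := fun t r => ((uu M r : ℝ) : ℂ) * ψ t r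
          + ((ff M ℓ r : ℝ) : ℂ) * α t r) hEq1 hr,
        Lbar_add (Sm.cmul (fun r hr => contDiffAt_uu (hr0 r hr).ne') hψs)
          (Sm.cmul (fun r hr => contDiffAt_ff (hr0 r hr).ne') hαs) hr,
        Lbar_radmul hψs hr (hasDerivAt_uu (M := M) (hr0 r hr).ne').differentiableAt,
        Lbar_radmul hαs hr (hasDerivAt_ff (M := M) (ℓ := ℓ) (hr0 r hr).ne').differentiableAt,
        hLbψ t r hr, hLbα t r hr, tort_uu (k := k) (hr0 r hr).ne',
        tort_ff (k := k) (ℓ := ℓ) (hr0 r hr).ne', hV_eq]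
      simp only [uu, ff, gg]
      push_cast
      ring
    have hD : ∀ t r, rp < r → Lop M k Ψ t r
        = ((-(gg M ℓ r) : ℝ) : ℂ) * ψ t r + ((-(6 * M) : ℝ) : ℂ) * α t r := by
      intro t r hr
      have h1 : Lop M k (Lbar M k ψ) t r
          = ((rad M k (w M k) r : ℝ) : ℂ) * Ψ t r
            + ((w M k r : ℝ) : ℂ) * Lop M k Ψ t r := by
        rw [Lop_congr (Ξ := fun t r => ((w M k r : ℝ) : ℂ) * Ψ t r) hLbψ hr]
        exact Lop_radmul hΨs hr ((hasDerivAt_w (hr0 r hr).ne').differentiableAt)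
      have h2 := (hC t r hr).symm.trans h1
      apply mul_left_cancel₀ (hwneC r hr)
      rw [rad_w (hr0 r hr).ne', hV_eq] at h2
      simp only [uu, gg] at h2 ⊢
      push_cast at h2 ⊢
      linear_combination -h2
    refine ⟨?_, ?_⟩
    · intro t r hrm
      have hr : rp < r := hrm
      simp only [RW]
      rw [hC t r hr, rad_w (hr0 r hr).ne', hV_eq]
      simp only [uu, gg]
      push_cast
      ring
    · intro t r hrm
      have hr : rp < r := hrm
      simp only [RW]
      have hLL : Lop M k (Lbar M k Ψ) t r = -(((V M k ℓ r : ℝ) : ℂ) * Ψ t r) := by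
        rw [comm_LopLbar hrp0.le hΨs hr,
          Lbar_congr (Ξ := fun t r => ((-(gg M ℓ r) : ℝ) : ℂ) * ψ t r
            + ((-(6 * M) : ℝ) : ℂ) * α t r) hD hr,
          Lbar_add (Sm.cmul (fun r hr => (contDiffAt_gg (hr0 r hr).ne').neg) hψs)
            (Sm.constC _ hαs) hr,
          Lbar_radmul hψs hr ((hasDerivAt_gg (M := M) (ℓ := ℓ) (hr0 r hr).ne').fun_neg).differentiableAt,
          Lbar_cconst_mul ((-(6 * M) : ℝ) : ℂ),
          hLbψ t r hr, hLbα t r hr, tort_ngg (k := k) (ℓ := ℓ) (hr0 r hr).ne', hV_eq]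
        simp only [gg]
        push_cast
        ring
      rw [hLL]
      ring
  · -- spin −2
    intro hT
    set ψ := ChandraM M k α with hψdef
    set Ψ := ChandraM M k ψ with hΨdef
    have hψs : Sm rp ψ :=
      Sm.cmul (fun r hr => contDiffAt_winv (hr0 r hr).ne' (hwne r hr)) (hαs.lop hrp0.le)
    have hΨs : Sm rp Ψ :=
      Sm.cmul (fun r hr => contDiffAt_winv (hr0 r hr).ne' (hwne r hr)) (hψs.lop hrp0.le)
    have hLα : ∀ t r, rp < r → Lop M k α t r = ((w M k r : ℝ) : ℂ) * ψ t r := by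
      intro t r hr
      show Lop M k α t r
        = ((w M k r : ℝ) : ℂ) * ((((w M k r)⁻¹ : ℝ) : ℂ) * Lop M k α t r)
      rw [← mul_assoc, ← Complex.ofReal_mul, mul_inv_cancel₀ (hwne r hr),
        Complex.ofReal_one, one_mul]
    have hLψ : ∀ t r, rp < r → Lop M k ψ t r = ((w M k r : ℝ) : ℂ) * Ψ t r := by
      intro t r hr
      show Lop M k ψ t r
        = ((w M k r : ℝ) : ℂ) * ((((w M k r)⁻¹ : ℝ) : ℂ) * Lop M k ψ t r)
      rw [← mul_assoc, ← Complex.ofReal_mul, mul_inv_cancel₀ (hwne r hr),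
        Complex.ofReal_one, one_mul]
    have hEq1 : ∀ t r, rp < r → Lbar M k ψ t r
        = ((-(uu M r) : ℝ) : ℂ) * ψ t r + ((ff M ℓ r : ℝ) : ℂ) * α t r := by
      intro t r hr
      have h1 : Lop M k (Lbar M k α) t r
          = -(((rad M k (w M k) r : ℝ) : ℂ)) * ψ t r
            + ((w M k r : ℝ) : ℂ) * Lbar M k ψ t r := by
        rw [comm_LopLbar hrp0.le hαs hr,
          Lbar_congr (Ξ := fun t r => ((w M k r : ℝ) : ℂ) * ψ t r) hLα hr]
        exact Lbar_radmul hψs hr ((hasDerivAt_w (hr0 r hr).ne').differentiableAt)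
      have h2 := hT t r hr
      simp only [RW] at h2
      rw [h1, rad_w (hr0 r hr).ne', hV_eq] at h2
      apply mul_left_cancel₀ (hwneC r hr)
      simp only [uu, ff, gg] at h2 ⊢
      push_cast at h2 ⊢
      linear_combination -h2
    have hC : ∀ t r, rp < r → Lop M k (Lbar M k ψ) t r
        = -(((w M k r * uu M r : ℝ) : ℂ) * Ψ t r) - ((V M k ℓ r : ℝ) : ℂ) * ψ t r
          + ((6 * M * w M k r : ℝ) : ℂ) * α t r := by
      intro t r hr
      rw [Lop_congr (Ξ := fun t r => ((-(uu M r) : ℝ) : ℂ) * ψ t r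
          + ((ff M ℓ r : ℝ) : ℂ) * α t r) hEq1 hr,
        Lop_add (Sm.cmul (fun r hr => (contDiffAt_uu (hr0 r hr).ne').neg) hψs)
          (Sm.cmul (fun r hr => contDiffAt_ff (hr0 r hr).ne') hαs) hr,
        Lop_radmul hψs hr ((hasDerivAt_uu (M := M) (hr0 r hr).ne').fun_neg).differentiableAt,
        Lop_radmul hαs hr (hasDerivAt_ff (M := M) (ℓ := ℓ) (hr0 r hr).ne').differentiableAt,
        hLψ t r hr, hLα t r hr, tort_nuu (k := k) (hr0 r hr).ne',
        tort_ff (k := k) (ℓ := ℓ) (hr0 r hr).ne', hV_eq]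
      simp only [uu, ff, gg]
      push_cast
      ring
    have hD : ∀ t r, rp < r → Lbar M k Ψ t r
        = ((-(gg M ℓ r) : ℝ) : ℂ) * ψ t r + ((6 * M : ℝ) : ℂ) * α t r := by
      intro t r hr
      have h1 : Lop M k (Lbar M k ψ) t r
          = -(((rad M k (w M k) r : ℝ) : ℂ)) * Ψ t r
            + ((w M k r : ℝ) : ℂ) * Lbar M k Ψ t r := by
        rw [comm_LopLbar hrp0.le hψs hr,
          Lbar_congr (Ξ := fun t r => ((w M k r : ℝ) : ℂ) * Ψ t r) hLψ hr]
        exact Lbar_radmul hΨs hr ((hasDerivAt_w (hr0 r hr).ne').differentiableAt)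
      have h2 := (hC t r hr).symm.trans h1
      apply mul_left_cancel₀ (hwneC r hr)
      rw [rad_w (hr0 r hr).ne', hV_eq] at h2
      simp only [uu, gg] at h2 ⊢
      push_cast at h2 ⊢
      linear_combination -h2
    refine ⟨?_, ?_⟩
    · intro t r hrm
      have hr : rp < r := hrm
      simp only [RW]
      rw [hC t r hr, rad_w (hr0 r hr).ne', hV_eq]
      simp only [uu, gg]
      push_cast
      ring
    · intro t r hrm
      have hr : rp < r := hrm
      simp only [RW]
      have hLL : Lop M k (Lbar M k Ψ) t r = -(((V M k ℓ r : ℝ) : ℂ) * Ψ t r) := by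
        rw [Lop_congr (Ξ := fun t r => ((-(gg M ℓ r) : ℝ) : ℂ) * ψ t r
            + ((6 * M : ℝ) : ℂ) * α t r) hD hr,
          Lop_add (Sm.cmul (fun r hr => (contDiffAt_gg (hr0 r hr).ne').neg) hψs)
            (Sm.constC _ hαs) hr,
          Lop_radmul hψs hr ((hasDerivAt_gg (M := M) (ℓ := ℓ) (hr0 r hr).ne').fun_neg).differentiableAt,
          Lop_cconst_mul ((6 * M : ℝ) : ℂ),
          hLψ t r hr, hLα t r hr, tort_ngg (k := k) (ℓ := ℓ) (hr0 r hr).ne', hV_eq]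
        simp only [gg]
        push_cast
        ring
      rw [hLL]
      ring

end RWAdS
end
end

section
/- Exponential decay from an energy boundedness and a Carleman-type integral estimate: let C > 0 and 𝔭 > 0 be real constants, let ℓ ≥ 2 be an integer, and let e : ℝ → [0, ∞) be a continuous function satisfying e(t2) ≤ C e(t1) for all t1 ≤ t2 and e(t2) + ∫_{t1}^{t2} e(t) dt ≤ e^{C ℓ^𝔭} e(t1) for all t1 ≤ t2. Then for every t0 and every t ≥ t0, e(t) ≤ 10 C exp( e^{−C ℓ^𝔭} (t0 − t) ) e(t0). -/
/-!
With `M = exp (C ℓ^𝔭)`, the Carleman estimate bounds the tail integral `F x = ∫_x^t e` by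
`M e(x) = -M F'(x)`, so Grönwall's inequality makes `F` decay like `exp (-(x - t₀)/M)`.
If `t - t₀ ≤ M` the boundedness `e t ≤ C e(t₀)` already suffices; otherwise the boundedness
gives `M e(t) ≤ C ∫_{t-M}^t e`, and the decay of `F` at `x = t - M` costs only a factor
`exp 1 < 10`.
-/

noncomputable section

open MeasureTheory Filter Set

theorem integral_tail_le_mul_exp {f : ℝ → ℝ} {M a b : ℝ} (hf : Continuous f) (hM : 0 < M)
    (htail : ∀ x ∈ Ico a b, ∫ u in x..b, f u ≤ M * f x) :
    ∀ x ∈ Icc a b, ∫ u in x..b, f u ≤ (∫ u in a..b, f u) * Real.exp (-(x - a) / M) := by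
  have hderiv (x : ℝ) : HasDerivAt (fun y => ∫ u in y..b, f u) (-f x) x :=
    intervalIntegral.integral_hasDerivAt_left (hf.intervalIntegrable x b)
      hf.aestronglyMeasurable.stronglyMeasurableAtFilter hf.continuousAt
  intro x hx
  have := le_gronwallBound_of_liminf_deriv_right_le (f' := fun x => -f x) (K := -M⁻¹) (ε := 0)
    (fun y _ => (hderiv y).continuousAt.continuousWithinAt)
    (fun y _ r hr => (hderiv y).hasDerivWithinAt.liminf_right_slope_le hr) le_rfl
    (fun y hy => by
      rw [neg_mul, add_zero, neg_le_neg_iff, inv_mul_le_iff₀ hM]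
      exact htail y hy) x hx
  rw [gronwallBound_ε0] at this
  convert this using 3
  ring

theorem sub_mul_le_mul_integral_of_le_mul {f : ℝ → ℝ} {C a b : ℝ} (hab : a ≤ b)
    (hf : IntervalIntegrable f volume a b) (hbd : ∀ x ∈ Icc a b, f b ≤ C * f x) :
    (b - a) * f b ≤ C * ∫ u in a..b, f u := by
  rw [← intervalIntegral.integral_const_mul, ← smul_eq_mul, ← intervalIntegral.integral_const]
  exact intervalIntegral.integral_mono_on hab intervalIntegrable_const (hf.const_mul C) hbd

theorem le_exp_one_mul_exp_of_integral_tail_le {f : ℝ → ℝ} {C M a b : ℝ}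
    (hf : Continuous f) (hC : 0 ≤ C) (hM : 0 < M) (hab : a ≤ b) (ha : 0 ≤ f a)
    (hbd : ∀ x ∈ Icc a b, f b ≤ C * f x)
    (htail : ∀ x ∈ Icc a b, ∫ u in x..b, f u ≤ M * f x) :
    f b ≤ Real.exp 1 * C * Real.exp (-(b - a) / M) * f a := by
  rcases le_or_gt (b - a) M with hshort | hlong
  · have : 1 ≤ Real.exp 1 * Real.exp (-(b - a) / M) := by
      rw [← Real.exp_add, Real.one_le_exp_iff, neg_div, ← sub_eq_add_neg, sub_nonneg,
        div_le_one hM]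
      exact hshort
    calc f b ≤ C * f a := hbd a ⟨le_rfl, hab⟩
      _ ≤ C * f a * (Real.exp 1 * Real.exp (-(b - a) / M)) :=
          le_mul_of_one_le_right (mul_nonneg hC ha) this
      _ = _ := by ring
  · set s := b - M
    have hs : s ∈ Icc a b := ⟨by linarith, by linarith⟩
    have hdecay :=
      integral_tail_le_mul_exp hf hM (fun x hx => htail x (Ico_subset_Icc_self hx)) s hs
    have hlower := sub_mul_le_mul_integral_of_le_mul hs.2 (hf.intervalIntegrable s b)
      (fun x hx => hbd x ⟨hs.1.trans hx.1, hx.2⟩)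
    have hexp : Real.exp (-(s - a) / M) = Real.exp 1 * Real.exp (-(b - a) / M) := by
      rw [← Real.exp_add]; congr 1; field_simp; ring
    have : M * f b ≤ M * (Real.exp 1 * C * Real.exp (-(b - a) / M) * f a) :=
      calc M * f b = (b - s) * f b := by ring
        _ ≤ C * ∫ u in s..b, f u := hlower
        _ ≤ C * ((M * f a) * Real.exp (-(s - a) / M)) := by
            gcongr
            exact hdecay.trans (by gcongr; exact htail a ⟨le_rfl, hab⟩)
        _ = _ := by rw [hexp]; ring
    exact le_of_mul_le_mul_left this hM

theorem exponential_decay_from_carleman_general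
    (C p : ℝ) (hC : 0 < C) (ℓ : ℕ)
    (e : ℝ → ℝ) (hcont : Continuous e) (hnonneg : ∀ t, 0 ≤ e t)
    (hbd : ∀ t1 t2 : ℝ, t1 ≤ t2 → e t2 ≤ C * e t1)
    (hcar : ∀ t1 t2 : ℝ, t1 ≤ t2 →
      e t2 + ∫ t in t1..t2, e t ≤ Real.exp (C * (ℓ : ℝ) ^ p) * e t1) :
    ∀ t0 t : ℝ, t0 ≤ t →
      e t ≤ 10 * C * Real.exp (Real.exp (-(C * (ℓ : ℝ) ^ p)) * (t0 - t)) * e t0 := by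
  intro t0 t ht
  set M := Real.exp (C * (ℓ : ℝ) ^ p)
  have hdecay := le_exp_one_mul_exp_of_integral_tail_le hcont hC.le (Real.exp_pos _) ht
    (hnonneg t0) (fun x hx => hbd x t hx.2)
    (fun x hx => by linarith [hcar x t hx.2, hnonneg t])
  have hexp : Real.exp (-(C * (ℓ : ℝ) ^ p)) * (t0 - t) = -(t - t0) / M := by
    rw [Real.exp_neg]; ring
  have hexp_one : Real.exp 1 ≤ 10 := by linarith [Real.exp_one_lt_d9]
  rw [hexp]
  calc e t ≤ Real.exp 1 * C * Real.exp (-(t - t0) / M) * e t0 := hdecay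
    _ ≤ 10 * C * Real.exp (-(t - t0) / M) * e t0 := by gcongr; exact hnonneg t0

/-- Exponential decay from an energy boundedness and a Carleman-type integral
estimate: if a continuous nonnegative function e satisfies
e(t₂) ≤ C e(t₁) and e(t₂) + ∫_{t₁}^{t₂} e ≤ e^{Cℓ^𝔭} e(t₁) for all t₁ ≤ t₂,
then e(t) ≤ 10 C exp(e^{−Cℓ^𝔭}(t₀ − t)) e(t₀) for all t ≥ t₀. -/
theorem exponential_decay_from_carleman
    (C p : ℝ) (hC : 0 < C) (hp : 0 < p) (ℓ : ℕ) (hℓ : 2 ≤ ℓ)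
    (e : ℝ → ℝ) (hcont : Continuous e) (hnonneg : ∀ t, 0 ≤ e t)
    (hbd : ∀ t1 t2 : ℝ, t1 ≤ t2 → e t2 ≤ C * e t1)
    (hcar : ∀ t1 t2 : ℝ, t1 ≤ t2 →
      e t2 + ∫ t in t1..t2, e t ≤ Real.exp (C * (ℓ : ℝ) ^ p) * e t1) :
    ∀ t0 t : ℝ, t0 ≤ t →
      e t ≤ 10 * C * Real.exp (Real.exp (-(C * (ℓ : ℝ) ^ p)) * (t0 - t)) * e t0 :=
  exponential_decay_from_carleman_general C p hC ℓ e hcont hnonneg hbd hcar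
end
end

section
/- Logarithmic decay from modewise exponential decay by interpolation: let C > 0 and 𝔭 > 0 be real constants, and for each pair of integers (m, ℓ) with ℓ ≥ 2 and |m| ≤ ℓ let e_{mℓ} : ℝ → [0, ∞) be continuous, with Σ_{ℓ≥2} Σ_{|m|≤ℓ} ℓ^2 e_{mℓ}(t) < ∞ for every t, and suppose that for every such (m, ℓ): e_{mℓ}(t2) ≤ C e_{mℓ}(t1) for all t1 ≤ t2, and e_{mℓ}(t2) + ∫_{t1}^{t2} e_{mℓ}(t) dt ≤ e^{C ℓ^𝔭} e_{mℓ}(t1) for all t1 ≤ t2. Then there exists a constant C′ > 0 depending only on C and 𝔭 such that for every t0 and every t with t − t0 > 1, Σ_{ℓ≥2} Σ_{|m|≤ℓ} e_{mℓ}(t) ≤ C′ ( log(t − t0) )^{−2/𝔭} Σ_{ℓ≥2} Σ_{|m|≤ℓ} ℓ^2 e_{mℓ}(t0). -/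
/-!
Fix a mode and put `x = t - t₀`. Since `e(t) ≤ C e(s)` for `t₀ ≤ s ≤ t`, averaging the
Carleman-type estimate over `[t₀, t]` gives `e(t) ≤ C e^{Cℓ^𝔭} e(t₀) / x`, while boundedness gives
`e(t) ≤ C e(t₀)`. For low modes, `2Cℓ^𝔭 ≤ log x`, the first bound is at most
`C e(t₀) / √x ≲ (log x)^{-2/𝔭} e(t₀)`; for high modes, `log x ≤ 2Cℓ^𝔭`, the second one is at most
`(2C)^{2/𝔭} (log x)^{-2/𝔭} ℓ² e(t₀)`. Summing over the modes gives the theorem.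
-/

noncomputable section

open MeasureTheory Filter Set

/-- Index set of angular modes: pairs (m, ℓ) with ℓ ≥ 2 and |m| ≤ ℓ. -/
def ModeIdx : Type := {q : ℤ × ℕ // 2 ≤ q.2 ∧ |q.1| ≤ (q.2 : ℤ)}

namespace Real

theorem log_rpow_le_mul_sqrt {x p : ℝ} (hx : 1 ≤ x) (hp : 0 < p) :
    log x ^ (2 / p) ≤ (4 / p) ^ (2 / p) * √x := calc
  log x ^ (2 / p) ≤ (x ^ (p / 4) / (p / 4)) ^ (2 / p) :=
    rpow_le_rpow (log_nonneg hx) (log_le_rpow_div (by linarith) (by positivity)) (by positivity)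
  _ = (4 / p) ^ (2 / p) * √x := by
    rw [div_eq_inv_mul, mul_rpow (by positivity) (by positivity), ← rpow_mul (by linarith),
      sqrt_eq_rpow]
    congr 2
    · field_simp
    · field_simp
      norm_num

theorem min_one_exp_div_le {C p x ℓ : ℝ} (hC : 0 < C) (hp : 0 < p) (hx : 1 < x) (hℓ : 1 ≤ ℓ) :
    min 1 (exp (C * ℓ ^ p) / x)
      ≤ ((2 * C) ^ (2 / p) + (4 / p) ^ (2 / p)) * ℓ ^ 2 * log x ^ (-(2 / p)) := by
  have hlog : 0 < log x := log_pos hx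
  rw [rpow_neg hlog.le, ← div_eq_mul_inv, le_div_iff₀ (by positivity)]
  rcases le_total (log x) (2 * C * ℓ ^ p) with hhigh | hlow
  · have hpow : log x ^ (2 / p) ≤ (2 * C) ^ (2 / p) * ℓ ^ 2 := calc
      log x ^ (2 / p) ≤ (2 * C * ℓ ^ p) ^ (2 / p) :=
        rpow_le_rpow hlog.le hhigh (by positivity)
      _ = (2 * C) ^ (2 / p) * ℓ ^ 2 := by
        rw [mul_rpow (by positivity) (by positivity), ← rpow_mul (by linarith),
          mul_div_cancel₀ _ hp.ne', rpow_two]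
    calc min 1 (exp (C * ℓ ^ p) / x) * log x ^ (2 / p) ≤ 1 * log x ^ (2 / p) :=
          mul_le_mul_of_nonneg_right (min_le_left _ _) (by positivity)
      _ ≤ ((2 * C) ^ (2 / p) + (4 / p) ^ (2 / p)) * ℓ ^ 2 := by
        rw [one_mul, add_mul]
        linarith [mul_nonneg (by positivity : 0 ≤ (4 / p) ^ (2 / p)) (sq_nonneg ℓ)]
  · have hexp : exp (C * ℓ ^ p) ≤ √x := calc
      exp (C * ℓ ^ p) ≤ exp (log x / 2) := exp_le_exp.2 (by linarith)
      _ = √x := by rw [exp_half, exp_log (by linarith)]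
    calc min 1 (exp (C * ℓ ^ p) / x) * log x ^ (2 / p)
        ≤ √x / x * ((4 / p) ^ (2 / p) * √x) :=
          mul_le_mul ((min_le_right _ _).trans (by gcongr)) (log_rpow_le_mul_sqrt hx.le hp)
            (by positivity) (by positivity)
      _ = (4 / p) ^ (2 / p) := by
        rw [div_mul_eq_mul_div, div_eq_iff (by linarith)]
        linear_combination (4 / p) ^ (2 / p) * mul_self_sqrt (by linarith : 0 ≤ x)
      _ ≤ (2 * C) ^ (2 / p) + (4 / p) ^ (2 / p) := le_add_of_nonneg_left (by positivity)
      _ ≤ ((2 * C) ^ (2 / p) + (4 / p) ^ (2 / p)) * ℓ ^ 2 :=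
        le_mul_of_one_le_right (by positivity) (one_le_pow₀ hℓ)

end Real

open Real

theorem sub_mul_le_of_add_integral_le {f : ℝ → ℝ} {C A t₀ t : ℝ} (hC : 0 ≤ C) (ht : t₀ ≤ t)
    (hf : IntervalIntegrable f volume t₀ t) (hft : 0 ≤ f t)
    (hbdd : ∀ s ∈ Icc t₀ t, f t ≤ C * f s) (hcar : f t + ∫ s in t₀..t, f s ≤ A * f t₀) :
    (t - t₀) * f t ≤ C * (A * f t₀) := calc
  (t - t₀) * f t = ∫ _ in t₀..t, f t := by simp
  _ ≤ ∫ s in t₀..t, C * f s :=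
    intervalIntegral.integral_mono_on ht intervalIntegrable_const (hf.const_mul C) hbdd
  _ = C * ∫ s in t₀..t, f s := intervalIntegral.integral_const_mul C f
  _ ≤ C * (A * f t₀) := mul_le_mul_of_nonneg_left (by linarith) hC

theorem le_log_rpow_neg_mul_of_add_integral_le {f : ℝ → ℝ} {C p ℓ t₀ t : ℝ} (hC : 0 < C)
    (hp : 0 < p) (hℓ : 1 ≤ ℓ) (ht : 1 < t - t₀) (hf : IntervalIntegrable f volume t₀ t)
    (hft : 0 ≤ f t) (hbdd : ∀ s ∈ Icc t₀ t, f t ≤ C * f s)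
    (hcar : f t + ∫ s in t₀..t, f s ≤ exp (C * ℓ ^ p) * f t₀) :
    f t ≤ C * ((2 * C) ^ (2 / p) + (4 / p) ^ (2 / p)) * log (t - t₀) ^ (-(2 / p))
      * (ℓ ^ 2 * f t₀) := by
  have hbdd₀ : f t ≤ C * f t₀ := hbdd t₀ ⟨le_rfl, by linarith⟩
  have hft₀ : 0 ≤ f t₀ := nonneg_of_mul_nonneg_right (hft.trans hbdd₀) hC
  have havg := sub_mul_le_of_add_integral_le hC.le (by linarith) hf hft hbdd hcar
  calc f t ≤ C * f t₀ * min 1 (exp (C * ℓ ^ p) / (t - t₀)) := by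
        rw [mul_min_of_nonneg _ _ (by positivity), mul_one, ← mul_div_assoc]
        exact le_min hbdd₀ ((le_div_iff₀ (by linarith)).2 (by linarith))
    _ ≤ C * f t₀ * (((2 * C) ^ (2 / p) + (4 / p) ^ (2 / p)) * ℓ ^ 2
          * log (t - t₀) ^ (-(2 / p))) := by
        gcongr
        exact min_one_exp_div_le hC hp ht hℓ
    _ = _ := by ring

/-- Logarithmic decay from modewise exponential decay by interpolation:
if each mode energy e_{mℓ} satisfies the boundedness estimate
e_{mℓ}(t₂) ≤ C e_{mℓ}(t₁) and the Carleman-type estimate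
e_{mℓ}(t₂) + ∫_{t₁}^{t₂} e_{mℓ} ≤ e^{Cℓ^𝔭} e_{mℓ}(t₁), and if
Σ ℓ² e_{mℓ}(t) < ∞ for every t, then there is C′ = C′(C, 𝔭) with
Σ e_{mℓ}(t) ≤ C′ (log(t − t₀))^{−2/𝔭} Σ ℓ² e_{mℓ}(t₀) whenever t − t₀ > 1. -/
theorem logarithmic_decay_from_modewise_decay
    (C p : ℝ) (hC : 0 < C) (hp : 0 < p) :
    ∃ C' : ℝ, 0 < C' ∧
      ∀ e : ℤ → ℕ → ℝ → ℝ,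
        (∀ m ℓ, Continuous (e m ℓ)) →
        (∀ m ℓ t, 0 ≤ e m ℓ t) →
        (∀ t : ℝ, Summable (fun q : ModeIdx => (q.1.2 : ℝ) ^ 2 * e q.1.1 q.1.2 t)) →
        (∀ m : ℤ, ∀ ℓ : ℕ, 2 ≤ ℓ → |m| ≤ (ℓ : ℤ) →
          ∀ t1 t2 : ℝ, t1 ≤ t2 → e m ℓ t2 ≤ C * e m ℓ t1) →
        (∀ m : ℤ, ∀ ℓ : ℕ, 2 ≤ ℓ → |m| ≤ (ℓ : ℤ) →
          ∀ t1 t2 : ℝ, t1 ≤ t2 →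
            e m ℓ t2 + ∫ t in t1..t2, e m ℓ t
              ≤ Real.exp (C * (ℓ : ℝ) ^ p) * e m ℓ t1) →
        ∀ t0 t : ℝ, 1 < t - t0 →
          (∑' q : ModeIdx, e q.1.1 q.1.2 t)
            ≤ C' * Real.log (t - t0) ^ (-(2 / p))
              * ∑' q : ModeIdx, (q.1.2 : ℝ) ^ 2 * e q.1.1 q.1.2 t0 := by
  refine ⟨C * ((2 * C) ^ (2 / p) + (4 / p) ^ (2 / p)), by positivity, ?_⟩
  intro e hcont hpos hsum hbdd hcar t0 t ht
  set c := C * ((2 * C) ^ (2 / p) + (4 / p) ^ (2 / p)) * log (t - t0) ^ (-(2 / p))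
  have hmode : ∀ q : ModeIdx, e q.1.1 q.1.2 t ≤ c * ((q.1.2 : ℝ) ^ 2 * e q.1.1 q.1.2 t0) := by
    rintro ⟨⟨m, ℓ⟩, hℓ, hm⟩
    exact le_log_rpow_neg_mul_of_add_integral_le hC hp (by exact_mod_cast (by omega : 1 ≤ ℓ)) ht
      ((hcont m ℓ).intervalIntegrable _ _) (hpos m ℓ t)
      (fun s hs => hbdd m ℓ hℓ hm s t hs.2) (hcar m ℓ hℓ hm t0 t (by linarith))
  have hsum' := (hsum t0).mul_left c
  rw [← tsum_mul_left]
  exact (hsum'.of_nonneg_of_le (fun q => hpos _ _ t) hmode).tsum_le_tsum hmode hsum'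
end
end

section
/- Quantitative bounds on the Carleman potential in the three regions: there exist constants ε1, c, C > 0, depending only on M and k, such that for every integer ℓ ≥ 2 and every real 𝔎 ≥ ε1^{-1} ℓ^2 the following holds, where r_{𝔎,−1} < r_{𝔎,+1} are radii in (r+, ∞) with r+ < r_{𝔎,−1} < r+ + 𝔎^{-1} r+^2 < r_{𝔎,+1} such that 𝒱 ≥ 0 on (r+, r_{𝔎,−1}], 𝒱 ≤ 0 on [r_{𝔎,−1}, r_{𝔎,+1}], and 𝒱 ≥ 0 on [r_{𝔎,+1}, ∞), and where r_{𝔎,−2} := r+ + 𝔎^{-1} r+^2 − 𝔎^{-1} r+^2 (𝔎^{-1} ℓ^2)^{1/4} and r_{𝔎,+2} := r+ + 𝔎^{-1} r+^2 + 𝔎^{-1} r+^2 (𝔎^{-1} ℓ^2)^{1/4}: (i) 𝒱(r) ≥ c ℓ^2 for all r+ < r < r_{𝔎,−2}; (ii) |𝒱(r)| ≤ C ℓ^2 for all r_{𝔎,−1} < r < r_{𝔎,+1}; (iii) 𝒱(r) ≥ c (𝔎^{-1} ℓ^2)^{1/2} 𝔎^2 w(r) and 𝒱(r) ≥ c ℓ^2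 for all r > r_{𝔎,+2}. -/
noncomputable section

open MeasureTheory Filter Set Topology

namespace RWAdS

/-- The Carleman potential 𝒱. -/
def carlemanV (M k : ℝ) (ℓ : ℕ) (K r : ℝ) : ℝ :=
  -(3 / 2) * (2 / r - 6 * M / r ^ 2) * (lam ℓ - 6 * M / r)
    - 2 * K * w M k r * (lam ℓ - 1 / 4 - 9 * M / (2 * r))
    + 12 * M * w M k r
    + 1 / 4 * K * (K * w M k r + 2 / r - 6 * M / r ^ 2) ^ 2

private lemma Dm_expand (M k rp r : ℝ) (hrp : rp ≠ 0) (h0 : Dm M k rp = 0) :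
    Dm M k r = (6*M - 2*rp)*(r - rp)
      + (r - rp)^2 * (1 + k^2*(r^2 + 2*r*rp + 3*rp^2)) := by
  have h : rp * Dm M k r = rp * ((6*M - 2*rp)*(r - rp)
      + (r - rp)^2 * (1 + k^2*(r^2 + 2*r*rp + 3*rp^2))) := by
    unfold Dm at h0 ⊢
    linear_combination (rp + 4*(r - rp)) * h0
  exact mul_left_cancel₀ hrp h

set_option maxHeartbeats 4000000 in
/-- Quantitative bounds on the Carleman potential in the three regions
determined by its sign changes r_{𝔎,±1} and the auxiliary radii r_{𝔎,±2}:
(i) 𝒱 ≳ ℓ² near the horizon, (ii) |𝒱| ≲ ℓ² between the sign changes, and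
(iii) 𝒱 ≳ (𝔎⁻¹ℓ²)^{1/2}𝔎²w and 𝒱 ≳ ℓ² far out. -/
theorem carleman_potential_bounds
    (M k : ℝ) (hM : 0 < M) (hk : 0 < k) (rp : ℝ) (hrp : IsHorizon M k rp) :
    ∃ ε1 c C : ℝ, 0 < ε1 ∧ 0 < c ∧ 0 < C ∧
      ∀ (ℓ : ℕ), 2 ≤ ℓ → ∀ K : ℝ, ε1⁻¹ * (ℓ : ℝ) ^ 2 ≤ K →
        ∀ rm1 rp1 : ℝ,
          rp < rm1 → rm1 < rp + K⁻¹ * rp ^ 2 → rp + K⁻¹ * rp ^ 2 < rp1 →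
          (∀ r : ℝ, rp < r → r ≤ rm1 → 0 ≤ carlemanV M k ℓ K r) →
          (∀ r : ℝ, rm1 ≤ r → r ≤ rp1 → carlemanV M k ℓ K r ≤ 0) →
          (∀ r : ℝ, rp1 ≤ r → 0 ≤ carlemanV M k ℓ K r) →
          -- (i) near the horizon
          ((∀ r : ℝ, rp < r →
              r < rp + K⁻¹ * rp ^ 2
                    - K⁻¹ * rp ^ 2 * (K⁻¹ * (ℓ : ℝ) ^ 2) ^ ((1 : ℝ) / 4) →
              c * (ℓ : ℝ) ^ 2 ≤ carlemanV M k ℓ K r) ∧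
          -- (ii) between the sign changes
          (∀ r : ℝ, rm1 < r → r < rp1 →
              |carlemanV M k ℓ K r| ≤ C * (ℓ : ℝ) ^ 2) ∧
          -- (iii) far out
          (∀ r : ℝ, rp + K⁻¹ * rp ^ 2
                  + K⁻¹ * rp ^ 2 * (K⁻¹ * (ℓ : ℝ) ^ 2) ^ ((1 : ℝ) / 4) < r →
              c * (K⁻¹ * (ℓ : ℝ) ^ 2) ^ ((1 : ℝ) / 2) * K ^ 2 * w M k r
                  ≤ carlemanV M k ℓ K r ∧
                c * (ℓ : ℝ) ^ 2 ≤ carlemanV M k ℓ K r)) := by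
  obtain ⟨hrp0, hrp2M, hDrp, hDpos⟩ := hrp
  have hrpne : rp ≠ 0 := ne_of_gt hrp0
  have h2Mrp : 0 < 2*M - rp := by linarith only [hrp2M]
  obtain ⟨A, hAdef⟩ : ∃ x : ℝ, x = (6*M - 2*rp)/rp^2 := ⟨_, rfl⟩
  have hA : A * rp^2 = 6*M - 2*rp := by rw [hAdef]; field_simp
  have hA0 : 0 < A := by
    rw [hAdef]
    exact div_pos (by linarith only [hrp2M, hM]) (pow_pos hrp0 2)
  obtain ⟨G, hGdef⟩ : ∃ x : ℝ, x = 2/rp + 6*M/rp^2 := ⟨_, rfl⟩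
  have hG0 : 0 < G := by
    rw [hGdef]
    exact add_pos (div_pos two_pos hrp0)
      (div_pos (by linarith only [hM]) (pow_pos hrp0 2))
  obtain ⟨D1, hD1def⟩ : ∃ x : ℝ, x = 2 + 3*M/(2*rp) := ⟨_, rfl⟩
  have hD1two : 2 ≤ D1 := by
    have h : 0 ≤ 3*M/(2*rp) :=
      le_of_lt (div_pos (by linarith only [hM]) (by linarith only [hrp0]))
    linarith only [h, hD1def]
  obtain ⟨B1, hB1def⟩ : ∃ x : ℝ, x = 3/2*G*D1 := ⟨_, rfl⟩
  have hB10 : 0 < B1 := by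
    have h := mul_pos hG0 (lt_of_lt_of_le two_pos hD1two)
    linarith only [h, hB1def]
  obtain ⟨U0, hU0def⟩ : ∃ x : ℝ, x = 2*G + 1 := ⟨_, rfl⟩
  have hU01 : 1 ≤ U0 := by linarith only [hG0, hU0def]
  obtain ⟨CQ, hCQdef⟩ : ∃ x : ℝ, x = 1 + 24*k^2*M^2 := ⟨_, rfl⟩
  have hCQ0 : 0 < CQ := by rw [hCQdef]; positivity
  have h6M2rp : 0 < 6*M - 2*rp := by linarith only [hrp2M, hM]
  obtain ⟨C7, hC7def⟩ : ∃ x : ℝ, x = 16*M^4*U0/(6*M - 2*rp) := ⟨_, rfl⟩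
  have hC70 : 0 < C7 := by
    rw [hC7def]
    apply div_pos _ h6M2rp
    have h := mul_pos (pow_pos hM 4) (lt_of_lt_of_le one_pos hU01)
    linarith only [h]
  obtain ⟨Z, hZdef⟩ : ∃ x : ℝ, x = rp^2 + C7 := ⟨_, rfl⟩
  have hZ0 : 0 < Z := by linarith only [hC70, sq_nonneg rp, hZdef]
  have hZrp : rp^2 ≤ Z := by linarith only [hC70, hZdef]
  obtain ⟨G1, hG1def⟩ : ∃ x : ℝ, x = (12*M + 2*rp)/rp^3 := ⟨_, rfl⟩
  have hG1 : G1 * rp^3 = 12*M + 2*rp := by rw [hG1def]; field_simp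
  have hG10 : 0 < G1 := by
    rw [hG1def]
    exact div_pos (by linarith only [hM, hrp0]) (pow_pos hrp0 3)
  obtain ⟨E1, hE1def⟩ : ∃ x : ℝ, x = 4*A*Z^2/rp^3 := ⟨_, rfl⟩
  have hE1 : E1 * rp^3 = 4*A*Z^2 := by rw [hE1def]; field_simp
  have hE10 : 0 < E1 := by
    rw [hE1def]
    exact div_pos (by linarith only [mul_pos hA0 (pow_pos hZ0 2)])
      (pow_pos hrp0 3)
  obtain ⟨E2, hE2def⟩ : ∃ x : ℝ, x = CQ*Z^2/rp^4 := ⟨_, rfl⟩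
  have hE2 : E2 * rp^4 = CQ*Z^2 := by rw [hE2def]; field_simp
  have hE20 : 0 < E2 := by
    rw [hE2def]
    exact div_pos (by linarith only [mul_pos hCQ0 (pow_pos hZ0 2)])
      (pow_pos hrp0 4)
  obtain ⟨E3, hE3def⟩ : ∃ x : ℝ, x = G1*Z := ⟨_, rfl⟩
  have hE30 : 0 < E3 := by linarith only [mul_pos hG10 hZ0, hE3def]
  obtain ⟨E0, hE0def⟩ : ∃ x : ℝ, x = E1 + E2 + E3 := ⟨_, rfl⟩
  have hE00 : 0 < E0 := by linarith only [hE10, hE20, hE30, hE0def]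
  obtain ⟨U1, hU1def⟩ : ∃ x : ℝ, x = A + E2 := ⟨_, rfl⟩
  have hU10 : 0 < U1 := by linarith only [hA0, hE20, hU1def]
  obtain ⟨D, hDdef⟩ : ∃ x : ℝ, x = 1 + B1 + 4*U1 + 4*U0 := ⟨_, rfl⟩
  have hD0 : 0 < D := by linarith only [hB10, hU10, hU01, hDdef]
  have hD1' : 1 ≤ D := by linarith only [hB10, hU10, hU01, hDdef]
  have hDB5 : B1 + 5 ≤ D := by linarith only [hU10, hU01, hDdef]
  obtain ⟨Kmin, hKmindef⟩ : ∃ x : ℝ,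
      x = 1 + rp^2/(2*M - rp) + Z/(2*M - rp) + (U0+1)/k^2 + 4*E0^4/A^4 := ⟨_, rfl⟩
  have hKm1 : 0 ≤ rp^2/(2*M - rp) := div_nonneg (sq_nonneg rp) h2Mrp.le
  have hKm2 : 0 ≤ Z/(2*M - rp) := div_nonneg hZ0.le h2Mrp.le
  have hKm3 : 0 ≤ (U0+1)/k^2 := div_nonneg (by linarith only [hU01]) (sq_nonneg k)
  have hKm4 : 0 ≤ 4*E0^4/A^4 := div_nonneg (by positivity) (by positivity)
  have hKmin1 : 1 ≤ Kmin := by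
    linarith only [hKm1, hKm2, hKm3, hKm4, hKmindef]
  have hKmin0 : 0 < Kmin := by linarith only [hKmin1]
  obtain ⟨eta, hetadef⟩ : ∃ x : ℝ,
      x = min (A^2/(32*D)) (min (1/(64*D)) (1/(1+Kmin))) := ⟨_, rfl⟩
  have heta0 : 0 < eta := by
    rw [hetadef]
    exact lt_min (div_pos (pow_pos hA0 2) (by linarith only [hD0]))
      (lt_min (div_pos one_pos (by linarith only [hD0]))
        (div_pos one_pos (by linarith only [hKmin0])))
  have heta1 : eta ≤ A^2/(32*D) := by rw [hetadef]; exact min_le_left _ _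
  have heta2 : eta ≤ 1/(64*D) := by
    rw [hetadef]; exact le_trans (min_le_right _ _) (min_le_left _ _)
  have heta3 : eta ≤ 1/(1+Kmin) := by
    rw [hetadef]; exact le_trans (min_le_right _ _) (min_le_right _ _)
  have hetale1 : eta ≤ 1 := by
    have h64 : (1:ℝ)/(64*D) ≤ 1 := by
      rw [div_le_one (by linarith only [hD0] : (0:ℝ) < 64*D)]
      linarith only [hD1']
    linarith only [h64, heta2]
  have heta2s : eta^2 ≤ eta := by
    have h := mul_nonneg heta0.le (sub_nonneg.mpr hetale1)
    linarith only [h]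
  obtain ⟨c, hcdef⟩ : ∃ x : ℝ, x = min (1/32) (A^2/(32*(U0+1))) := ⟨_, rfl⟩
  have hc0 : 0 < c := by
    rw [hcdef]
    exact lt_min (by norm_num)
      (div_pos (pow_pos hA0 2) (by linarith only [hU01]))
  have hc32 : c ≤ 1/32 := by rw [hcdef]; exact min_le_left _ _
  have hcU0 : c ≤ A^2/(32*(U0+1)) := by rw [hcdef]; exact min_le_right _ _
  obtain ⟨C, hCdef⟩ : ∃ x : ℝ, x = B1 + 4*U0 + 1 := ⟨_, rfl⟩
  have hC0 : 0 < C := by linarith only [hB10, hU01, hCdef]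
  refine ⟨eta^2, c, C, pow_pos heta0 2, hc0, hC0, ?_⟩
  intro ℓ hℓ K hK rm1 rp1 hrm1a hrm1b hrp1a hpos1 hneg hpos2
  have hℓR : (2:ℝ) ≤ (ℓ:ℝ) := by exact_mod_cast hℓ
  obtain ⟨L, hLdef⟩ : ∃ x : ℝ, x = ((ℓ:ℝ))^2 := ⟨_, rfl⟩
  rw [← hLdef] at hK
  have hL4 : 4 ≤ L := by
    rw [hLdef]
    linarith only [hℓR, sq_nonneg ((ℓ:ℝ) - 2)]
  have hlam1 : L ≤ lam ℓ := by
    rw [hLdef]; simp only [lam]; linarith only [hℓR]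
  have hlam2 : lam ℓ ≤ 2*L := by
    rw [hLdef]; simp only [lam]
    linarith only [hℓR, sq_nonneg ((ℓ:ℝ) - 1)]
  have hLeta : L ≤ eta^2 * K := by
    have h2 := mul_le_mul_of_nonneg_left hK (pow_pos heta0 2).le
    rwa [← mul_assoc, mul_inv_cancel₀ (ne_of_gt (pow_pos heta0 2)), one_mul] at h2
  have hK4 : 4 ≤ eta^2 * K := le_trans hL4 hLeta
  have hK0 : 0 < K := by
    by_contra hcon
    push_neg at hcon
    linarith only [hK4, mul_nonneg (sq_nonneg eta) (neg_nonneg.mpr hcon)]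
  have hK1 : 1 ≤ K := by
    have h0 : 0 ≤ 1 - eta^2 := by linarith only [heta2s, hetale1]
    have h1 := mul_nonneg h0 hK0.le
    linarith only [h1, hK4]
  have hetaKmin : eta * (1 + Kmin) ≤ 1 := by
    have h1 := (le_div_iff₀ (by linarith only [hKmin0] : (0:ℝ) < 1 + Kmin)).mp heta3
    linarith only [h1]
  have hKminK : Kmin ≤ K := by
    have hnn : 0 ≤ eta*(1+Kmin) :=
      mul_nonneg heta0.le (by linarith only [hKmin0])
    have h4' := mul_le_mul hetaKmin hetaKmin hnn zero_le_one
    have h4 : eta^2 * (1+Kmin)^2 ≤ 1 := by linarith only [h4']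
    have ha := mul_le_mul_of_nonneg_right hK4 (sq_nonneg (1+Kmin))
    have hb := mul_le_mul_of_nonneg_left h4 hK0.le
    have h5 : 4*(1+Kmin)^2 ≤ K := by linarith only [ha, hb]
    linarith only [h5, hKmin0.le, sq_nonneg Kmin]
  have hKa : rp^2/(2*M - rp) ≤ K := by
    linarith only [hKminK, hKm2, hKm3, hKm4, hKmindef]
  have hKc : (U0+1)/k^2 ≤ K := by
    linarith only [hKminK, hKm1, hKm2, hKm4, hKmindef]
  have hKd : 4*E0^4/A^4 ≤ K := by
    linarith only [hKminK, hKm1, hKm2, hKm3, hKmindef]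
  obtain ⟨del, hdeldef⟩ : ∃ x : ℝ, x = (K⁻¹ * L) ^ ((1:ℝ)/4) := ⟨_, rfl⟩
  have hKL0 : (0:ℝ) < K⁻¹ * L :=
    mul_pos (inv_pos.mpr hK0) (by linarith only [hL4])
  have hdel0 : 0 < del := by rw [hdeldef]; exact Real.rpow_pos_of_pos hKL0 _
  have hdel4 : del^4 = K⁻¹ * L := by
    rw [hdeldef, ← Real.rpow_natCast ((K⁻¹ * L) ^ ((1:ℝ)/4)) 4,
      ← Real.rpow_mul hKL0.le]
    norm_num
  have hdel2 : (K⁻¹ * L) ^ ((1:ℝ)/2) = del^2 := by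
    rw [hdeldef, ← Real.rpow_natCast ((K⁻¹ * L) ^ ((1:ℝ)/4)) 2,
      ← Real.rpow_mul hKL0.le]
    norm_num
  have hdel4K : del^4 * K = L := by
    rw [hdel4]; field_simp
  have hKLeta : K⁻¹ * L ≤ eta^2 := by
    rw [inv_mul_le_iff₀ hK0]
    linarith only [hLeta]
  have hdel2eta : del^2 ≤ eta := by
    have h : (del^2)^2 ≤ eta^2 := by
      have he : (del^2)^2 = del^4 := by ring
      rw [he, hdel4]; exact hKLeta
    exact le_of_pow_le_pow_left₀ (by norm_num) heta0.le h
  have hdelle1 : del ≤ 1 := by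
    have h : del^4 ≤ 1^4 := by
      rw [hdel4, one_pow]
      linarith only [hKLeta, heta2s, hetale1]
    exact le_of_pow_le_pow_left₀ (by norm_num) (by norm_num) h
  have hdel2le1 : del^2 ≤ 1 := by
    have h := mul_le_mul hdelle1 hdelle1 hdel0.le zero_le_one
    linarith only [h]
  have hLKdel2 : L ≤ eta * (K * del^2) := by
    have h : K * del^2 * del^2 = L := by rw [← hdel4K]; ring
    have hp := mul_nonneg (sub_nonneg.mpr hdel2eta)
      (mul_pos hK0 (pow_pos hdel0 2)).le
    linarith only [hp, h]
  have hAdelK : 2*E0 ≤ A * (del * K) := by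
    have hKK : 1*1 ≤ K*K := mul_le_mul hK1 hK1 zero_le_one hK0.le
    have hK3 : K ≤ K^3 := by
      have h := mul_le_mul_of_nonneg_left hKK hK0.le
      linarith only [h]
    have hE4 : 4*E0^4 ≤ K * A^4 := by
      rw [div_le_iff₀ (by positivity : (0:ℝ) < A^4)] at hKd
      linarith only [hKd]
    have h6 : (2*E0)^4 ≤ (A*(del*K))^4 := by
      have he : (A*(del*K))^4 = A^4 * (del^4*K) * K^3 := by ring
      rw [he, hdel4K]
      have p1 := mul_le_mul_of_nonneg_left hK3 (by positivity : (0:ℝ) ≤ A^4)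
      have q3 := mul_le_mul_of_nonneg_right hL4
        (mul_nonneg (by positivity : (0:ℝ) ≤ A^4) (pow_pos hK0 3).le)
      linarith only [hE4, p1, q3]
    exact le_of_pow_le_pow_left₀ (by norm_num) (by positivity) h6
  -- pointwise facts
  have hDrw : ∀ r : ℝ, Dm M k r = A*rp^2*(r - rp)
      + (r - rp)^2 * (1 + k^2*(r^2 + 2*r*rp + 3*rp^2)) := by
    intro r
    rw [Dm_expand M k rp r hrpne hDrp, hA]
  have hwpos : ∀ r : ℝ, rp < r → 0 < w M k r := by
    intro r hr
    have hr0 : 0 < r := hrp0.trans hr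
    exact div_pos (hDpos r hr) (pow_pos hr0 4)
  have hQpos : ∀ r : ℝ, rp < r → 0 < 1 + k^2*(r^2 + 2*r*rp + 3*rp^2) := by
    intro r hr
    have hr0 : 0 < r := hrp0.trans hr
    have h1 : 0 ≤ r^2 + 2*r*rp + 3*rp^2 := by
      linarith only [sq_nonneg r, sq_nonneg rp, mul_pos hr0 hrp0]
    have h2 := mul_nonneg (sq_nonneg k) h1
    linarith only [h2]
  have hggG : ∀ r : ℝ, rp < r → -G ≤ 2/r - 6*M/r^2 ∧ 2/r - 6*M/r^2 ≤ G := by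
    intro r hr
    have hr0 : 0 < r := hrp0.trans hr
    have hrsq : rp^2 ≤ r^2 := by
      have h := mul_nonneg (by linarith only [hr] : (0:ℝ) ≤ r - rp)
        (by linarith only [hr, hrp0] : (0:ℝ) ≤ r + rp)
      linarith only [h]
    have h1 : 2/r ≤ 2/rp := by
      rw [div_le_div_iff₀ hr0 hrp0]
      linarith only [hr]
    have h2 : 6*M/r^2 ≤ 6*M/rp^2 := by
      rw [div_le_div_iff₀ (pow_pos hr0 2) (pow_pos hrp0 2)]
      have h := mul_le_mul_of_nonneg_left hrsq (by linarith only [hM] : (0:ℝ) ≤ 6*M)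
      linarith only [h]
    have h3 : 0 ≤ 2/r := le_of_lt (div_pos two_pos hr0)
    have h4 : 0 ≤ 6*M/r^2 := div_nonneg (by linarith only [hM]) (sq_nonneg r)
    have h5 : 0 ≤ 2/rp := le_of_lt (div_pos two_pos hrp0)
    have h6 : 0 ≤ 6*M/rp^2 := div_nonneg (by linarith only [hM]) (sq_nonneg rp)
    constructor
    · rw [hGdef]; linarith only [h2, h3, h5]
    · rw [hGdef]; linarith only [h1, h4, h6]
  -- master lower bound
  have hmaster : ∀ r : ℝ, rp < r →
      -B1*L - 4*(K * w M k r)*L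
        + 1/4*K*(K * w M k r + (2/r - 6*M/r^2))^2 ≤ carlemanV M k ℓ K r := by
    intro r hr
    have hr0 : 0 < r := hrp0.trans hr
    have hw := hwpos r hr
    have hu : 0 < K * w M k r := mul_pos hK0 hw
    obtain ⟨hgl, hgu⟩ := hggG r hr
    have hm6a : 0 ≤ 6*M/r := div_nonneg (by linarith only [hM]) hr0.le
    have hm6b : 6*M/r ≤ 6*M/rp := by
      rw [div_le_div_iff₀ hr0 hrp0]
      have h := mul_le_mul_of_nonneg_left hr.le
        (by linarith only [hM] : (0:ℝ) ≤ 6*M)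
      linarith only [h]
    have hm6c : 6*M/rp ≤ D1 * L := by
      have he : 3*M/(2*rp)*4 = 6*M/rp := by ring
      have h7 : 0 ≤ 3*M/(2*rp) :=
        le_of_lt (div_pos (by linarith only [hM]) (by linarith only [hrp0]))
      have hD1L : D1*L = 2*L + 3*M/(2*rp)*L := by rw [hD1def]; ring
      have hp := mul_nonneg h7 (by linarith only [hL4] : (0:ℝ) ≤ L - 4)
      linarith only [hD1L, he, hp, hL4]
    have hq1 : lam ℓ - 6*M/r ≤ D1*L := by
      have hp := mul_nonneg (by linarith only [hD1two] : (0:ℝ) ≤ D1 - 2)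
        (by linarith only [hL4] : (0:ℝ) ≤ L)
      linarith only [hlam2, hm6a, hp]
    have hq2 : -(D1*L) ≤ lam ℓ - 6*M/r := by
      linarith only [hlam1, hL4, hm6b, hm6c]
    have hgu' : 0 ≤ G - (2/r - 6*M/r^2) := by linarith only [hgu]
    have hgl' : 0 ≤ (2/r - 6*M/r^2) + G := by linarith only [hgl]
    have hq1' : 0 ≤ D1*L - (lam ℓ - 6*M/r) := by linarith only [hq1]
    have hq2' : 0 ≤ (lam ℓ - 6*M/r) + D1*L := by linarith only [hq2]
    have hB1L : B1*L = 3/2*G*D1*L := by rw [hB1def]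
    have hT1 : -(B1*L) ≤ -(3/2) * (2/r - 6*M/r^2) * (lam ℓ - 6*M/r) := by
      linarith only [hB1L, mul_nonneg hgu' hq2', mul_nonneg hgl' hq1']
    have hm9 : 0 ≤ 9*M/(2*r) :=
      le_of_lt (div_pos (by linarith only [hM]) (by linarith only [hr0]))
    have hq3 : lam ℓ - 1/4 - 9*M/(2*r) ≤ 2*L := by linarith only [hlam2, hm9]
    have hT2 : -(4*(K * w M k r)*L)
        ≤ -(2*K* w M k r*(lam ℓ - 1/4 - 9*M/(2*r))) := by
      have h := mul_le_mul_of_nonneg_left hq3 hu.le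
      linarith only [h]
    have hT3 : (0:ℝ) ≤ 12*M* w M k r := by
      have h := mul_pos hM hw
      linarith only [h]
    simp only [carlemanV]
    linarith only [hT1, hT2, hT3]
  -- upper bound for K*w in the near zone
  have hUP : ∀ r : ℝ, rp < r → K*(r - rp) ≤ Z → r ≤ 2*M →
      K * w M k r ≤ A*(K*(r-rp))/rp^2 + E2/K := by
    intro r hr hxZ hr2M
    have hr0 : 0 < r := hrp0.trans hr
    have hx0 : 0 < r - rp := by linarith only [hr]
    have hQ0 : 0 < 1 + k^2*(r^2 + 2*r*rp + 3*rp^2) := hQpos r hr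
    have hQCQ : 1 + k^2*(r^2 + 2*r*rp + 3*rp^2) ≤ CQ := by
      have ha : r^2 ≤ 4*M^2 := by
        have h := mul_nonneg (by linarith only [hr2M] : (0:ℝ) ≤ 2*M - r)
          (by linarith only [hr2M, hr0] : (0:ℝ) ≤ 2*M + r)
        linarith only [h]
      have hb : r*rp ≤ 4*M^2 := by
        have h1 := mul_nonneg (by linarith only [hr2M] : (0:ℝ) ≤ 2*M - r)
          (by linarith only [hM] : (0:ℝ) ≤ 2*M)
        have h2 := mul_nonneg hr0.le
          (by linarith only [hr, hr2M] : (0:ℝ) ≤ 2*M - rp)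
        linarith only [h1, h2]
      have hc' : rp^2 ≤ 4*M^2 := by
        have h := mul_nonneg (by linarith only [hr, hr2M] : (0:ℝ) ≤ 2*M - rp)
          (by linarith only [hr, hr2M, hrp0] : (0:ℝ) ≤ 2*M + rp)
        linarith only [h]
      have p1 := mul_le_mul_of_nonneg_left ha (sq_nonneg k)
      have p2 := mul_le_mul_of_nonneg_left hb (sq_nonneg k)
      have p3 := mul_le_mul_of_nonneg_left hc' (sq_nonneg k)
      linarith only [hCQdef, p1, p2, p3]
    have hrsq : rp^2 ≤ r^2 := by
      have h := mul_nonneg (by linarith only [hr] : (0:ℝ) ≤ r - rp)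
        (by linarith only [hr, hrp0] : (0:ℝ) ≤ r + rp)
      linarith only [h]
    have hrp4 : rp^4 ≤ r^4 := by
      have h := mul_le_mul hrsq hrsq (sq_nonneg rp) (sq_nonneg r)
      linarith only [h]
    have hKx0 : 0 ≤ K*(r-rp) := mul_nonneg hK0.le hx0.le
    have hnum1 : 0 ≤ A*rp^2*(r-rp) :=
      mul_nonneg (mul_nonneg hA0.le (sq_nonneg rp)) hx0.le
    have hnum2 : 0 ≤ (r-rp)^2*(1 + k^2*(r^2 + 2*r*rp + 3*rp^2)) :=
      mul_nonneg (sq_nonneg _) hQ0.le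
    have hnum0 : 0 ≤ (A*rp^2*(r-rp)
        + (r-rp)^2*(1 + k^2*(r^2 + 2*r*rp + 3*rp^2)))*K :=
      mul_nonneg (by linarith only [hnum1, hnum2]) hK0.le
    calc K * w M k r
        = (A*rp^2*(r-rp) + (r-rp)^2*(1 + k^2*(r^2 + 2*r*rp + 3*rp^2)))*K/r^4 := by
          simp only [w]; rw [hDrw r]; ring
      _ ≤ (A*rp^2*(r-rp) + (r-rp)^2*(1 + k^2*(r^2 + 2*r*rp + 3*rp^2)))*K/rp^4 := by
          rw [div_le_div_iff₀ (pow_pos hr0 4) (pow_pos hrp0 4)]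
          have h := mul_le_mul_of_nonneg_left hrp4 hnum0
          linarith only [h]
      _ = A*(K*(r-rp))/rp^2
          + (1 + k^2*(r^2 + 2*r*rp + 3*rp^2))*((K*(r-rp))*(K*(r-rp)))/(rp^4*K) := by
          field_simp
      _ ≤ A*(K*(r-rp))/rp^2 + E2/K := by
          have hKxZsq := mul_le_mul hxZ hxZ hKx0 hZ0.le
          have m1 := mul_le_mul_of_nonneg_left hKxZsq hQ0.le
          have m2 := mul_le_mul_of_nonneg_right hQCQ (sq_nonneg Z)
          have h8 : (1 + k^2*(r^2 + 2*r*rp + 3*rp^2))*((K*(r-rp))*(K*(r-rp)))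
              ≤ CQ*Z^2 := by linarith only [m1, m2]
          have h9 : (1 + k^2*(r^2 + 2*r*rp + 3*rp^2))*((K*(r-rp))*(K*(r-rp)))/(rp^4*K)
              ≤ E2/K := by
            rw [div_le_div_iff₀ (mul_pos (pow_pos hrp0 4) hK0) hK0]
            have h := mul_le_mul_of_nonneg_right h8 hK0.le
            linarith only [h, hE2, mul_le_mul_of_nonneg_right
              (le_of_eq hE2.symm) hK0.le]
          linarith only [h9]
  -- lower bound for K*w in the near zone
  have hLO : ∀ r : ℝ, rp < r → K*(r - rp) ≤ Z →
      A*(K*(r-rp))/rp^2 - E1/K ≤ K * w M k r := by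
    intro r hr hxZ
    have hr0 : 0 < r := hrp0.trans hr
    have hx0 : 0 < r - rp := by linarith only [hr]
    have hKx0 : 0 ≤ K*(r-rp) := mul_nonneg hK0.le hx0.le
    have hstep : A*(K*(r-rp))/rp^2 ≤ K*(A*rp^2*(r-rp))/r^4 + E1/K := by
      rw [div_add_div _ _ (by positivity : (r:ℝ)^4 ≠ 0) (ne_of_gt hK0),
        div_le_div_iff₀ (pow_pos hrp0 2) (mul_pos (pow_pos hr0 4) hK0)]
      have h4x : r^4 - rp^4 ≤ 4*r^3*(r-rp) := by
        have hq : 0 ≤ 3*r^2 + 2*r*rp + rp^2 := by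
          linarith only [sq_nonneg r, sq_nonneg rp, mul_pos hr0 hrp0]
        have h := mul_nonneg (sq_nonneg (r-rp)) hq
        linarith only [h]
      have hKx2' := mul_le_mul hxZ hxZ hKx0 hZ0.le
      have hKx2 : (K*(r-rp))*(K*(r-rp)) ≤ Z^2 := by linarith only [hKx2']
      have hAKxrp : 0 ≤ A*(K*(r-rp))*K*rp :=
        mul_nonneg (mul_nonneg (mul_nonneg hA0.le hKx0) hK0.le) hrp0.le
      have h4Arp : 0 ≤ A*r^3*rp :=
        mul_nonneg (mul_nonneg hA0.le (pow_pos hr0 3).le) hrp0.le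
      have hkey : A*(K*(r-rp))*(K*(r^4 - rp^4))*rp ≤ E1*r^4*rp^2*rp := by
        calc A*(K*(r-rp))*(K*(r^4 - rp^4))*rp
            ≤ A*(K*(r-rp))*(K*(4*r^3*(r-rp)))*rp := by
              have h := mul_le_mul_of_nonneg_left h4x hAKxrp
              linarith only [h]
          _ = 4*A*((K*(r-rp))*(K*(r-rp)))*r^3*rp := by ring
          _ ≤ 4*A*Z^2*r^3*rp := by
              have h := mul_le_mul_of_nonneg_left hKx2 h4Arp
              linarith only [h]
          _ = E1*rp^3*r^3*rp := by rw [hE1]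
          _ ≤ E1*r^4*rp^2*rp := by
              have h := mul_nonneg (mul_nonneg (mul_nonneg hE10.le
                (pow_pos hr0 3).le) (pow_pos hrp0 3).le) hx0.le
              linarith only [h]
      have hkey2 : A*(K*(r-rp))*(K*(r^4 - rp^4)) ≤ E1*r^4*rp^2 :=
        le_of_mul_le_mul_right hkey hrp0
      linarith only [hkey2]
    have hstep2 : K*(A*rp^2*(r-rp))/r^4 ≤ K * w M k r := by
      have hq : 0 ≤ (r-rp)^2*(1 + k^2*(r^2 + 2*r*rp + 3*rp^2)) :=
        mul_nonneg (sq_nonneg _) (hQpos r hr).le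
      have hnum : K*(A*rp^2*(r-rp)) ≤ K * Dm M k r := by
        rw [hDrw r]
        have h := mul_nonneg hK0.le hq
        linarith only [h]
      calc K*(A*rp^2*(r-rp))/r^4 ≤ K*Dm M k r/r^4 :=
            (div_le_div_iff_of_pos_right (pow_pos hr0 4)).mpr hnum
        _ = K * w M k r := by simp only [w]; ring
    linarith only [hstep, hstep2]
  -- refined bounds for 2/r - 6M/r^2 near the horizon
  have hGGid : ∀ r : ℝ, rp < r → 2/r - 6*M/r^2 + A
      = (r-rp)*(6*M*(r+rp) - 2*r*rp)/(r^2*rp^2) := by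
    intro r hr
    have hr0 : 0 < r := hrp0.trans hr
    have hr0' : r ≠ 0 := ne_of_gt hr0
    rw [hAdef]
    field_simp
    ring
  have hGGup : ∀ r : ℝ, rp < r → 2/r - 6*M/r^2 + A ≤ G1*(r-rp) := by
    intro r hr
    have hr0 : 0 < r := hrp0.trans hr
    have hx0 : 0 < r - rp := by linarith only [hr]
    rw [hGGid r hr, div_le_iff₀ (by positivity : (0:ℝ) < r^2*rp^2)]
    have hkey : (r-rp)*(6*M*(r+rp) - 2*r*rp)*rp ≤ G1*(r-rp)*(r^2*rp^2)*rp := by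
      have he : G1*(r-rp)*(r^2*rp^2)*rp = (12*M+2*rp)*((r-rp)*r^2) := by
        linear_combination (r-rp)*r^2*hG1
      rw [he]
      have p1 : 0 ≤ M*(r-rp)*(r-rp)*(2*r+rp) :=
        mul_nonneg (mul_nonneg (mul_nonneg hM.le hx0.le) hx0.le)
          (by linarith only [hr0, hrp0])
      have p2 : 0 ≤ (r-rp)*rp*r*(r+rp) :=
        mul_nonneg (mul_nonneg (mul_nonneg hx0.le hrp0.le) hr0.le)
          (by linarith only [hr0, hrp0])
      linarith only [p1, p2]
    exact le_of_mul_le_mul_right hkey hrp0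
  have hGGlo : ∀ r : ℝ, rp < r → -(G1*(r-rp)) ≤ 2/r - 6*M/r^2 + A := by
    intro r hr
    have hr0 : 0 < r := hrp0.trans hr
    have hx0 : 0 < r - rp := by linarith only [hr]
    rw [hGGid r hr, le_div_iff₀ (by positivity : (0:ℝ) < r^2*rp^2)]
    have hkey : -(G1*(r-rp))*(r^2*rp^2)*rp ≤ (r-rp)*(6*M*(r+rp) - 2*r*rp)*rp := by
      have he : -(G1*(r-rp))*(r^2*rp^2)*rp = -((12*M+2*rp)*((r-rp)*r^2)) := by
        linear_combination -((r-rp)*r^2)*hG1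
      rw [he]
      have q1 : 0 ≤ M*(r-rp)*r*rp :=
        mul_nonneg (mul_nonneg (mul_nonneg hM.le hx0.le) hr0.le) hrp0.le
      have q2 : 0 ≤ M*(r-rp)*rp*rp :=
        mul_nonneg (mul_nonneg (mul_nonneg hM.le hx0.le) hrp0.le) hrp0.le
      have q3 : 0 ≤ M*(r-rp)*r*r :=
        mul_nonneg (mul_nonneg (mul_nonneg hM.le hx0.le) hr0.le) hr0.le
      have q4 : 0 ≤ rp*(r-rp)*(r-rp)*r :=
        mul_nonneg (mul_nonneg (mul_nonneg hrp0.le hx0.le) hx0.le) hr0.le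
      linarith only [q1, q2, q3, q4]
    exact le_of_mul_le_mul_right hkey hrp0
  refine ⟨?_, ?_, ?_⟩
  · -- (i) near the horizon
    intro r hr hrlt
    rw [← hLdef] at hrlt ⊢
    rw [← hdeldef] at hrlt
    have hx0 : 0 < r - rp := by linarith only [hr]
    have hr0 : 0 < r := hrp0.trans hr
    have hKx : K*(r-rp) < (1 - del)*rp^2 := by
      have h1 : r - rp < K⁻¹*rp^2 - K⁻¹*rp^2*del := by linarith only [hrlt]
      have h2 := mul_lt_mul_of_pos_left h1 hK0
      calc K*(r-rp) < K*(K⁻¹*rp^2 - K⁻¹*rp^2*del) := h2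
        _ = (1 - del)*rp^2 := by
            field_simp
    have hKxrp : K*(r-rp) ≤ rp^2 := by
      linarith only [hKx, mul_nonneg hdel0.le (sq_nonneg rp)]
    have hKxZ : K*(r-rp) ≤ Z := le_trans hKxrp hZrp
    have hr2M : r ≤ 2*M := by
      rw [div_le_iff₀ h2Mrp] at hKa
      have h2 : K*(r-rp) ≤ K*(2*M - rp) := by linarith only [hKxrp, hKa]
      have h3 : r - rp ≤ 2*M - rp := le_of_mul_le_mul_left h2 hK0
      linarith only [h3]
    have hu1 : K * w M k r ≤ A*(1-del) + E2/K := by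
      have h1 := hUP r hr hKxZ hr2M
      have h2 : A*(K*(r-rp))/rp^2 ≤ A*(1-del) := by
        rw [div_le_iff₀ (pow_pos hrp0 2)]
        have h := mul_le_mul_of_nonneg_left hKx.le hA0.le
        linarith only [h]
      linarith only [h1, h2]
    have hu2 : K * w M k r ≤ U1 := by
      have hE2K : E2/K ≤ E2 := by
        rw [div_le_iff₀ hK0]
        have h := mul_nonneg (by linarith only [hK1] : (0:ℝ) ≤ K - 1) hE20.le
        linarith only [h]
      have h3 : A*(1-del) ≤ A := by
        have h := mul_nonneg hA0.le hdel0.le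
        linarith only [h]
      linarith only [hu1, hE2K, h3, hU1def]
    have hgg2 : 2/r - 6*M/r^2 ≤ -A + E3/K := by
      have h1 := hGGup r hr
      have h2 : G1*(r-rp) ≤ E3/K := by
        rw [le_div_iff₀ hK0, hE3def]
        have h := mul_le_mul_of_nonneg_left hKxZ hG10.le
        linarith only [h]
      linarith only [h1, h2]
    have hE23 : E2/K + E3/K ≤ E0/K := by
      rw [← add_div]
      apply (div_le_div_iff_of_pos_right hK0).mpr
      linarith only [hE10, hE0def]
    have hh : K * w M k r + (2/r - 6*M/r^2) ≤ -(A*del/2) := by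
      have h1 : K*w M k r + (2/r - 6*M/r^2) ≤ -(A*del) + E0/K := by
        linarith only [hu1, hgg2, hE23]
      have h2 : E0/K ≤ A*del/2 := by
        rw [div_le_iff₀ hK0]
        linarith only [hAdelK]
      linarith only [h1, h2]
    have hAd2 : 0 ≤ A*del/2 := by
      have h := mul_nonneg hA0.le hdel0.le
      linarith only [h]
    have hT4 : 1/16*(A^2*(K*del^2))
        ≤ 1/4*K*(K * w M k r + (2/r - 6*M/r^2))^2 := by
      have hh' : A*del/2 ≤ -(K * w M k r + (2/r - 6*M/r^2)) := by
        linarith only [hh]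
      have p := mul_le_mul hh' hh' hAd2 (by linarith only [hh', hAd2])
      have h3 : (A*del/2)^2 ≤ (K * w M k r + (2/r - 6*M/r^2))^2 := by
        linarith only [p]
      have p2 := mul_le_mul_of_nonneg_left h3
        (by linarith only [hK0] : (0:ℝ) ≤ 1/4*K)
      linarith only [p2]
    have hmain := hmaster r hr
    have h7 : eta*(32*D) ≤ A^2 :=
      (le_div_iff₀ (by linarith only [hD0])).mp heta1
    have hKdel2' : (1 + B1 + 4*U1)*L ≤ 1/16*(A^2*(K*del^2)) := by
      have h1 := mul_le_mul_of_nonneg_left hLKdel2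
        (by linarith only [hB10, hU10] : (0:ℝ) ≤ 1 + B1 + 4*U1)
      have hDS : (0:ℝ) ≤ D - (1 + B1 + 4*U1) := by
        linarith only [hDdef, hU01]
      have hp := mul_nonneg heta0.le hDS
      have h2 : 16*((1 + B1 + 4*U1)*eta) ≤ A^2 := by
        linarith only [h7, hp, mul_nonneg heta0.le
          (by linarith only [hB10, hU10] : (0:ℝ) ≤ 1 + B1 + 4*U1)]
      have p2 := mul_le_mul_of_nonneg_right h2
        (mul_pos hK0 (pow_pos hdel0 2)).le
      linarith only [h1, p2]
    have h5 : 4*(K*w M k r)*L ≤ 4*U1*L := by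
      have h := mul_le_mul_of_nonneg_right hu2 (by linarith only [hL4] : (0:ℝ) ≤ L)
      linarith only [h]
    have hfinal : L ≤ carlemanV M k ℓ K r := by
      linarith only [hmain, hT4, hKdel2', h5]
    have hp := mul_nonneg (by linarith only [hc32] : (0:ℝ) ≤ 1 - c)
      (by linarith only [hL4] : (0:ℝ) ≤ L)
    linarith only [hfinal, hp]
  · -- (ii) between the sign changes
    intro r hr1 hr2
    rw [← hLdef]
    have hrrp : rp < r := lt_trans hrm1a hr1
    have hVle : carlemanV M k ℓ K r ≤ 0 := hneg r hr1.le hr2.le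
    have hw := hwpos r hrrp
    have hu0 : 0 < K*w M k r := mul_pos hK0 hw
    obtain ⟨hgl, hgu⟩ := hggG r hrrp
    have hmain := hmaster r hrrp
    have huU0 : K*w M k r ≤ U0 := by
      by_contra hcon
      push_neg at hcon
      have hu1' : 1 ≤ K*w M k r := by linarith only [hcon, hU01]
      have h1 : K*w M k r/2 ≤ K*w M k r + (2/r - 6*M/r^2) := by
        linarith only [hcon, hgl, hU0def]
      have hT4 : K*(K*w M k r)^2/16
          ≤ 1/4*K*(K*w M k r + (2/r - 6*M/r^2))^2 := by
        have p := mul_le_mul h1 h1 (by linarith only [hu0])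
          (by linarith only [h1, hu0])
        have p2 := mul_le_mul_of_nonneg_left
          (by linarith only [p] :
            (K*w M k r/2)^2 ≤ (K*w M k r + (2/r - 6*M/r^2))^2)
          (by linarith only [hK0] : (0:ℝ) ≤ 1/4*K)
        linarith only [p2]
      have h2 : K*(K*w M k r)^2/16 ≤ B1*L + 4*(K*w M k r)*L := by
        linarith only [hmain, hVle, hT4]
      have h3 : B1*L ≤ B1*L*(K*w M k r) := by
        have p := mul_nonneg (mul_nonneg hB10.le
          (by linarith only [hL4] : (0:ℝ) ≤ L))
          (by linarith only [hu1'] : (0:ℝ) ≤ K*w M k r - 1)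
        linarith only [p]
      have h4'' : (K*(K*w M k r))*(K*w M k r) ≤ (16*(B1+4)*L)*(K*w M k r) := by
        linarith only [h2, h3]
      have h4 : K*(K*w M k r) ≤ 16*(B1+4)*L := le_of_mul_le_mul_right h4'' hu0
      have h5 : K ≤ 16*(B1+4)*L := by
        have p := mul_nonneg hK0.le
          (by linarith only [hu1'] : (0:ℝ) ≤ K*w M k r - 1)
        linarith only [h4, p]
      have h8 : K ≤ 16*(B1+4)*(eta^2*K) := by
        have p := mul_le_mul_of_nonneg_left hLeta
          (by linarith only [hB10] : (0:ℝ) ≤ 16*(B1+4))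
        linarith only [h5, p]
      have h9 : 1 ≤ 16*(B1+4)*eta^2 := by
        by_contra h9c
        push_neg at h9c
        have p := mul_pos (by linarith only [h9c] :
          (0:ℝ) < 1 - 16*(B1+4)*eta^2) hK0
        linarith only [p, h8]
      have h7 : eta*(64*D) ≤ 1 :=
        (le_div_iff₀ (by linarith only [hD0])).mp heta2
      have pe := mul_nonneg heta0.le
        (by linarith only [hDB5] : (0:ℝ) ≤ D - (B1+5))
      have pe3 := mul_nonneg (by linarith only [hB10] : (0:ℝ) ≤ B1 + 4)
        (by linarith only [heta2s] : (0:ℝ) ≤ eta - eta^2)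
      have pB := mul_nonneg heta0.le hB10.le
      linarith only [h9, pe, pe3, h7, pB, heta0.le]
    have hT4' : 0 ≤ 1/4*K*(K*w M k r + (2/r - 6*M/r^2))^2 :=
      mul_nonneg (by linarith only [hK0]) (sq_nonneg _)
    have h5 : 4*(K*w M k r)*L ≤ 4*U0*L := by
      have h := mul_le_mul_of_nonneg_right huU0
        (by linarith only [hL4] : (0:ℝ) ≤ L)
      linarith only [h]
    have hCL : C*L = B1*L + 4*U0*L + L := by rw [hCdef]; ring
    have hlow : -(C*L) ≤ carlemanV M k ℓ K r := by
      linarith only [hmain, hT4', h5, hCL, hL4]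
    rw [abs_le]
    constructor
    · linarith only [hlow]
    · have p := mul_pos hC0 (by linarith only [hL4] : (0:ℝ) < L)
      linarith only [hVle, p]
  · -- (iii) far out
    intro r hr
    rw [← hLdef] at hr ⊢
    rw [← hdeldef] at hr
    have hK1rp : 0 ≤ K⁻¹*rp^2 :=
      mul_nonneg (inv_pos.mpr hK0).le (sq_nonneg rp)
    have hK1rpd : 0 ≤ K⁻¹*rp^2*del := mul_nonneg hK1rp hdel0.le
    have hrrp : rp < r := by linarith only [hr, hK1rp, hK1rpd]
    have hw := hwpos r hrrp
    have hu0 : 0 < K*w M k r := mul_pos hK0 hw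
    have hr0 : 0 < r := hrp0.trans hrrp
    obtain ⟨hgl, hgu⟩ := hggG r hrrp
    have hgoalw : c * (K⁻¹*L)^((1:ℝ)/2) * K^2 * w M k r
        = c*del^2*(K*(K*w M k r)) := by
      rw [hdel2]; ring
    have hKdel20 : 0 < K*del^2 := mul_pos hK0 (pow_pos hdel0 2)
    rcases le_or_gt (K*w M k r) U0 with hcase | hcase
    · -- near case
      have hr2M : r ≤ 2*M := by
        by_contra hcon
        push_neg at hcon
        have hwk2 : k^2 ≤ w M k r := by
          simp only [w, Dm]
          rw [le_div_iff₀ (pow_pos hr0 4)]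
          have p := mul_nonneg (by linarith only [hcon] : (0:ℝ) ≤ r - 2*M) hr0.le
          linarith only [p]
        rw [div_le_iff₀ (pow_pos hk 2)] at hKc
        have h := mul_le_mul_of_nonneg_left hwk2 hK0.le
        linarith only [h, hKc, hcase, hU01]
      have hx0 : 0 < r - rp := by linarith only [hrrp]
      have hKxC7 : K*(r-rp) ≤ C7 := by
        have h1 : A*rp^2*(r-rp) ≤ Dm M k r := by
          rw [hDrw r]
          have h := mul_nonneg (sq_nonneg (r-rp)) (hQpos r hrrp).le
          linarith only [h]
        have ha : r^2 ≤ 4*M^2 := by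
          have h := mul_nonneg (by linarith only [hr2M] : (0:ℝ) ≤ 2*M - r)
            (by linarith only [hr2M, hr0] : (0:ℝ) ≤ 2*M + r)
          linarith only [h]
        have hr4 : r^4 ≤ 16*M^4 := by
          have h := mul_le_mul ha ha (sq_nonneg r) (by positivity)
          linarith only [h]
        have h2 : A*rp^2*(r-rp)/(16*M^4) ≤ w M k r := by
          simp only [w]
          exact div_le_div₀ (hDpos r hrrp).le h1 (pow_pos hr0 4) hr4
        have h3 := mul_le_mul_of_nonneg_left h2 hK0.le
        have h5 : K*(A*rp^2*(r-rp)/(16*M^4)) ≤ U0 := le_trans h3 hcase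
        rw [mul_div_assoc'] at h5
        rw [div_le_iff₀ (by positivity : (0:ℝ) < 16*M^4)] at h5
        have hC7' : C7*(A*rp^2) = 16*M^4*U0 := by
          rw [hC7def, hA]
          exact div_mul_cancel₀ _ (ne_of_gt h6M2rp)
        have h6 : (K*(r-rp))*(A*rp^2) ≤ C7*(A*rp^2) := by
          rw [hC7']
          linarith only [h5]
        exact le_of_mul_le_mul_right h6 (mul_pos hA0 (pow_pos hrp0 2))
      have hKxZ : K*(r-rp) ≤ Z := by
        linarith only [hKxC7, hZdef, sq_nonneg rp]
      have hKxlo : (1+del)*rp^2 ≤ K*(r-rp) := by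
        have h1 : K⁻¹*rp^2 + K⁻¹*rp^2*del < r - rp := by linarith only [hr]
        have h2 := mul_le_mul_of_nonneg_left h1.le hK0.le
        calc (1+del)*rp^2 = K*(K⁻¹*rp^2 + K⁻¹*rp^2*del) := by
              field_simp
          _ ≤ K*(r-rp) := h2
      have hlo := hLO r hrrp hKxZ
      have h2 : A*(1+del) ≤ A*(K*(r-rp))/rp^2 := by
        rw [le_div_iff₀ (pow_pos hrp0 2)]
        have h := mul_le_mul_of_nonneg_left hKxlo hA0.le
        linarith only [h]
      have hgg2 : -A - E3/K ≤ 2/r - 6*M/r^2 := by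
        have h1 := hGGlo r hrrp
        have h3 : G1*(r-rp) ≤ E3/K := by
          rw [le_div_iff₀ hK0, hE3def]
          have h := mul_le_mul_of_nonneg_left hKxZ hG10.le
          linarith only [h]
        linarith only [h1, h3]
      have hE13 : E1/K + E3/K ≤ E0/K := by
        rw [← add_div]
        apply (div_le_div_iff_of_pos_right hK0).mpr
        linarith only [hE20, hE0def]
      have hh : A*del/2 ≤ K * w M k r + (2/r - 6*M/r^2) := by
        have h1 : A*del - E0/K ≤ K*w M k r + (2/r - 6*M/r^2) := by
          linarith only [hlo, h2, hgg2, hE13]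
        have h2' : E0/K ≤ A*del/2 := by
          rw [div_le_iff₀ hK0]
          linarith only [hAdelK]
        linarith only [h1, h2']
      have hAd2 : 0 ≤ A*del/2 := by
        have h := mul_nonneg hA0.le hdel0.le
        linarith only [h]
      have hT4 : 1/16*(A^2*(K*del^2))
          ≤ 1/4*K*(K*w M k r + (2/r - 6*M/r^2))^2 := by
        have p := mul_le_mul hh hh hAd2 (by linarith only [hh, hAd2])
        have h3 : (A*del/2)^2 ≤ (K*w M k r + (2/r - 6*M/r^2))^2 := by
          linarith only [p]
        have p2 := mul_le_mul_of_nonneg_left h3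
          (by linarith only [hK0] : (0:ℝ) ≤ 1/4*K)
        linarith only [p2]
      have hmain := hmaster r hrrp
      have h5 : 4*(K*w M k r)*L ≤ 4*U0*L := by
        have h := mul_le_mul_of_nonneg_right hcase
          (by linarith only [hL4] : (0:ℝ) ≤ L)
        linarith only [h]
      have h6 : (B1 + 4*U0)*L ≤ (B1+4*U0)*(eta*(K*del^2)) := by
        have h := mul_le_mul_of_nonneg_left hLKdel2
          (by linarith only [hB10, hU01] : (0:ℝ) ≤ B1 + 4*U0)
        linarith only [h]
      have h7 : eta*(32*D) ≤ A^2 :=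
        (le_div_iff₀ (by linarith only [hD0])).mp heta1
      have h8 : (B1+4*U0)*eta ≤ A^2/32 := by
        have hDm2 : (0:ℝ) ≤ D - (B1+4*U0) := by
          linarith only [hDdef, hU10]
        have pe := mul_nonneg heta0.le hDm2
        linarith only [h7, pe]
      have p2 := mul_le_mul_of_nonneg_right h8 hKdel20.le
      have hVlow : 1/32*(A^2*(K*del^2)) ≤ carlemanV M k ℓ K r := by
        linarith only [hmain, hT4, h5, h6, p2]
      constructor
      · rw [hgoalw]
        have h9 : c*del^2*(K*(K*w M k r)) ≤ c*del^2*(K*U0) := by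
          have hcd : 0 ≤ c*del^2*K :=
            mul_nonneg (mul_nonneg hc0.le (sq_nonneg del)) hK0.le
          have h := mul_le_mul_of_nonneg_left hcase hcd
          linarith only [h]
        have h11 := (le_div_iff₀
          (by linarith only [hU01] : (0:ℝ) < 32*(U0+1))).mp hcU0
        have h10 : c*U0 ≤ A^2/32 := by
          linarith only [h11, hc0.le]
        have p3 := mul_le_mul_of_nonneg_right h10 hKdel20.le
        linarith only [h9, p3, hVlow]
      · have h9 : c*L ≤ c*(eta*(K*del^2)) :=
          mul_le_mul_of_nonneg_left hLKdel2 hc0.le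
        have h11 := (le_div_iff₀
          (by linarith only [hU01] : (0:ℝ) < 32*(U0+1))).mp hcU0
        have h10 : c*eta ≤ A^2/32 := by
          have p := mul_nonneg hc0.le
            (by linarith only [hetale1] : (0:ℝ) ≤ 1 - eta)
          have pU := mul_nonneg hc0.le
            (by linarith only [hU01] : (0:ℝ) ≤ U0)
          linarith only [h11, p, pU]
        have p3 := mul_le_mul_of_nonneg_right h10 hKdel20.le
        linarith only [h9, p3, hVlow]
    · -- far case
      have hmain := hmaster r hrrp
      have hu1 : 1 ≤ K*w M k r := by linarith only [hcase, hU0def, hG0]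
      have pu : 1 ≤ (K*w M k r)*(K*w M k r) := by
        have h := mul_le_mul hu1 hu1 zero_le_one hu0.le
        linarith only [h]
      have h1 : K*w M k r/2 ≤ K*w M k r + (2/r - 6*M/r^2) := by
        linarith only [hcase, hgl, hU0def]
      have hT4 : K*(K*w M k r)^2/16
          ≤ 1/4*K*(K*w M k r + (2/r - 6*M/r^2))^2 := by
        have p := mul_le_mul h1 h1 (by linarith only [hu0])
          (by linarith only [h1, hu0])
        have p2 := mul_le_mul_of_nonneg_left
          (by linarith only [p] :
            (K*w M k r/2)^2 ≤ (K*w M k r + (2/r - 6*M/r^2))^2)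
          (by linarith only [hK0] : (0:ℝ) ≤ 1/4*K)
        linarith only [p2]
      have h7 : eta*(64*D) ≤ 1 :=
        (le_div_iff₀ (by linarith only [hD0])).mp heta2
      have pe := mul_nonneg heta0.le
        (by linarith only [hDB5] : (0:ℝ) ≤ D - (B1+5))
      have pB := mul_nonneg heta0.le hB10.le
      have pKu : 0 ≤ K*(K*w M k r)*(K*w M k r - 1) :=
        mul_nonneg (mul_nonneg hK0.le hu0.le)
          (by linarith only [hu1])
      have hB1e : B1*L ≤ K*(K*w M k r)^2/64 := by
        have ha := mul_le_mul_of_nonneg_left hLeta hB10.le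
        have h2 : B1*eta^2 ≤ 1/64 := by
          have pe2 := mul_nonneg hB10.le
            (by linarith only [heta2s] : (0:ℝ) ≤ eta - eta^2)
          linarith only [h7, pe, pe2, heta0.le]
        have p1 := mul_le_mul_of_nonneg_right h2 hK0.le
        have pK2 : K ≤ K*((K*w M k r)*(K*w M k r)) := by
          have h := mul_nonneg hK0.le (by linarith only [pu] :
            (0:ℝ) ≤ (K*w M k r)*(K*w M k r) - 1)
          linarith only [h]
        linarith only [ha, p1, pK2]
      have h4uL : 4*(K*w M k r)*L ≤ K*(K*w M k r)^2/64 := by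
        have h1' : 4*L ≤ 4*(eta^2*K) := by linarith only [hLeta]
        have h2 : (4:ℝ)*eta^2 ≤ 1/64 := by
          linarith only [h7, pe, pB, heta2s]
        have p1 := mul_le_mul_of_nonneg_left h1' hu0.le
        have p2' := mul_le_mul_of_nonneg_right h2 hK0.le
        have p2 := mul_le_mul_of_nonneg_left p2' hu0.le
        linarith only [p1, p2, pKu]
      have hVlow : K*(K*w M k r)^2/32 ≤ carlemanV M k ℓ K r := by
        linarith only [hmain, hT4, hB1e, h4uL]
      constructor
      · rw [hgoalw]
        have ha1 : c*del^2 ≤ 1/32 := by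
          have p := mul_nonneg hc0.le
            (by linarith only [hdel2le1] : (0:ℝ) ≤ 1 - del^2)
          linarith only [p, hc32]
        have ha2 := mul_le_mul_of_nonneg_right ha1 (mul_pos hK0 hu0).le
        linarith only [ha2, pKu, hVlow]
      · have hb1 : c*L ≤ 1/32*L := by
          have p := mul_nonneg (by linarith only [hc32] : (0:ℝ) ≤ 1/32 - c)
            (by linarith only [hL4] : (0:ℝ) ≤ L)
          linarith only [p]
        have hb2 : L ≤ K := by
          have p := mul_nonneg (by linarith only [heta2s, hetale1] :
            (0:ℝ) ≤ 1 - eta^2) hK0.le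
          linarith only [hLeta, p]
        have hb3 : K ≤ K*(K*w M k r)^2 := by
          have h := mul_nonneg hK0.le (by linarith only [pu] :
            (0:ℝ) ≤ (K*w M k r)*(K*w M k r) - 1)
          linarith only [h]
        linarith only [hb1, hb2, hb3, hVlow, hL4]


end RWAdS
end
end
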